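/- arXiv:1404.1641 — 8 statements merged into one kernel-verified Lean document; each statement's English description precedes it below -/
import Mathlib

section
/- Let T be the companion matrix of an irreducible cubic over GF(q) with root τ a primitive element of GF(q^3). Then the homography of PG(2,q^3) induced by T has order q^2+q+1, fixes exactly the three points Q = (1,τ,τ^2), Q^q, Q^{q^2}, and no power T^i with 0 < i < q^2+q+1 fixes any other point. -/
open Polynomial Matrix


section Aux
variable {F : Type} [Field F]

lemma aux_mulP (M : Matrix (Fin 3) (Fin 3) F) (x : Fin 3 → F) (y : Fin 3 → F)
    (hM : ∀ j, M.mulVec (fun i => x j ^ (i : ℕ)) = y j • fun i : Fin 3 => x j ^ (i : ℕ)) :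
    M * (vandermonde x)ᵀ = (vandermonde x)ᵀ * diagonal y := by
  ext i j
  have h := congrFun (hM j) i
  simp only [Matrix.mulVec, dotProduct, Pi.smul_apply, smul_eq_mul] at h
  simp only [Matrix.mul_apply, transpose_apply, vandermonde_apply, diagonal_apply]
  rw [show (∑ l, M i l * x j ^ (l : ℕ)) = y j * x j ^ (i : ℕ) from h,
    Finset.sum_eq_single j (fun b _ hb => by simp [hb]) (by simp)]
  simp [mul_comm]

lemma aux_scalar (M : Matrix (Fin 3) (Fin 3) F) (x : Fin 3 → F) (hx : Function.Injective x)
    (c : F) (hM : ∀ j, M.mulVec (fun i => x j ^ (i : ℕ)) = c • fun i : Fin 3 => x j ^ (i : ℕ)) :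
    M = c • (1 : Matrix (Fin 3) (Fin 3) F) := by
  have hdet : IsUnit ((vandermonde x)ᵀ).det := by
    rw [det_transpose]
    exact (det_vandermonde_ne_zero_iff.mpr hx).isUnit
  have h := aux_mulP M x (fun _ => c) hM
  have hdiag : diagonal (fun _ : Fin 3 => c) = c • (1 : Matrix (Fin 3) (Fin 3) F) := by
    ext i j
    by_cases hij : i = j <;> simp [diagonal_apply, Matrix.one_apply, hij]
  rw [hdiag] at h
  calc M = M * (vandermonde x)ᵀ * ((vandermonde x)ᵀ)⁻¹ := by
        rw [Matrix.mul_nonsing_inv_cancel_right _ _ hdet]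
    _ = (vandermonde x)ᵀ * (c • 1) * ((vandermonde x)ᵀ)⁻¹ := by rw [h]
    _ = c • (1 : Matrix (Fin 3) (Fin 3) F) := by
        rw [Matrix.mul_smul, Matrix.mul_one, Matrix.smul_mul,
          Matrix.mul_nonsing_inv _ hdet]

lemma aux_classify (M : Matrix (Fin 3) (Fin 3) F) (x y : Fin 3 → F)
    (hx : Function.Injective x) (hy : Function.Injective y)
    (hM : ∀ j, M.mulVec (fun i => x j ^ (i : ℕ)) = y j • fun i : Fin 3 => x j ^ (i : ℕ))
    (v : Fin 3 → F) (hv : v ≠ 0) (c : F) (hc : M.mulVec v = c • v) :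
    ∃ j : Fin 3, ∃ a : F, v = a • fun i : Fin 3 => x j ^ (i : ℕ) := by
  set P := (vandermonde x)ᵀ with hP
  have hdet : IsUnit P.det := by
    rw [hP, det_transpose]
    exact (det_vandermonde_ne_zero_iff.mpr hx).isUnit
  set a := P⁻¹.mulVec v with ha
  have hva : v = P.mulVec a := by
    rw [ha, Matrix.mulVec_mulVec, Matrix.mul_nonsing_inv _ hdet, Matrix.one_mulVec]
  have hMP := aux_mulP M x y hM
  have key : ∀ j, a j * (y j - c) = 0 := by
    have h1 : P.mulVec ((diagonal y).mulVec a) = P.mulVec (c • a) := by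
      rw [Matrix.mulVec_mulVec, ← hMP, ← Matrix.mulVec_mulVec, ← hva,
        Matrix.mulVec_smul, ← hva, hc]
    have h2 : (diagonal y).mulVec a = c • a := by
      have := congrArg (fun w => P⁻¹.mulVec w) h1
      simpa [Matrix.mulVec_mulVec, ← Matrix.mul_assoc, Matrix.nonsing_inv_mul _ hdet, Matrix.one_mulVec]
        using this
    intro j
    have := congrFun h2 j
    rw [Matrix.mulVec_diagonal] at this
    simp only [Pi.smul_apply, smul_eq_mul] at this
    linear_combination this
  have hane : a ≠ 0 := by
    intro h0
    apply hv
    rw [hva, h0, Matrix.mulVec_zero]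
  obtain ⟨j0, hj0⟩ := Function.ne_iff.mp hane
  simp only [Pi.zero_apply] at hj0
  have hcy : c = y j0 := by
    have := key j0
    rcases mul_eq_zero.mp this with h | h
    · exact absurd h hj0
    · exact (sub_eq_zero.mp h).symm
  have hzero : ∀ j, j ≠ j0 → a j = 0 := by
    intro j hj
    rcases mul_eq_zero.mp (key j) with h | h
    · exact h
    · exact absurd (hy (by rw [sub_eq_zero.mp h, hcy])) hj
  refine ⟨j0, a j0, ?_⟩
  funext i
  rw [hva]
  simp only [Matrix.mulVec, dotProduct, hP, transpose_apply, vandermonde_apply,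
    Pi.smul_apply, smul_eq_mul]
  rw [Finset.sum_eq_single j0 (fun b _ hb => by rw [hzero b hb, mul_zero]) (by simp)]
  ring
end Aux

lemma aux_inj3 {α : Type*} (f : Fin 3 → α) (h01 : f 0 ≠ f 1) (h02 : f 0 ≠ f 2)
    (h12 : f 1 ≠ f 2) : Function.Injective f := by
  intro a b hab
  fin_cases a <;> fin_cases b <;> simp_all

lemma aux_pow_eig {F : Type} [Field F] (M : Matrix (Fin 3) (Fin 3) F) (v : Fin 3 → F)
    (a : F) (h : M.mulVec v = a • v) (i : ℕ) : (M ^ i).mulVec v = a ^ i • v := by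
  induction i with
  | zero => simp
  | succ m ih =>
      rw [pow_succ', ← Matrix.mulVec_mulVec, ih, Matrix.mulVec_smul, h, smul_smul,
        ← pow_succ]

lemma aux_nat1 (q : ℕ) (hq : 1 ≤ q) : (q - 1) * (q + 1) = q ^ 2 - 1 := by
  obtain ⟨m, rfl⟩ : ∃ m, q = m + 1 := ⟨q - 1, by omega⟩
  simp only [Nat.add_sub_cancel]
  have h : m * (m + 1 + 1) + 1 = (m + 1) ^ 2 := by ring
  omega

lemma aux_nat2 (q : ℕ) (hq : 1 ≤ q) : (q - 1) * q = q ^ 2 - q := by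
  obtain ⟨m, rfl⟩ : ∃ m, q = m + 1 := ⟨q - 1, by omega⟩
  simp only [Nat.add_sub_cancel]
  have h : m * (m + 1) + (m + 1) = (m + 1) ^ 2 := by ring
  omega

lemma aux_nat3 (q : ℕ) (hq : 1 ≤ q) : (q - 1) * (q ^ 2 + q + 1) = q ^ 3 - 1 := by
  obtain ⟨m, rfl⟩ : ∃ m, q = m + 1 := ⟨q - 1, by omega⟩
  simp only [Nat.add_sub_cancel]
  have h : m * ((m + 1) ^ 2 + (m + 1) + 1) + 1 = (m + 1) ^ 3 := by ring
  omega

/-- Let T be the companion matrix of an irreducible cubic over GF(q) whose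
root τ is a primitive element of GF(q^3). The homography of PG(2,q^3) induced by T has
order q^2+q+1, fixes exactly the three points Q = (1,τ,τ^2), Q^q, Q^{q^2}, and no power
T^i with 0 < i < q^2+q+1 fixes any other point. -/
theorem stmt5 (p n q : ℕ) (hp : p.Prime) (hn : 0 < n) (hq : q = p ^ n)
    (k F : Type) [Field k] [Field F] [Algebra k F] [Fintype k] [Fintype F]
    (hk : Fintype.card k = q) (hF : Fintype.card F = q ^ 3)
    (t0 t1 t2 : k)
    (hirr : Irreducible (X ^ 3 - C t2 * X ^ 2 - C t1 * X - C t0))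
    (τ : F) (hroot : aeval τ (X ^ 3 - C t2 * X ^ 2 - C t1 * X - C t0) = 0)
    (hprim : orderOf τ = q ^ 3 - 1)
    (T : Matrix (Fin 3) (Fin 3) F)
    (hT : T = !![0, 1, 0; 0, 0, 1;
      algebraMap k F t0, algebraMap k F t1, algebraMap k F t2]) :
    -- T^{q^2+q+1} is a (nonzero) scalar matrix, i.e. the homography has order dividing
    -- q^2+q+1, and no smaller positive power of T is scalar:
    (∃ c : F, c ≠ 0 ∧ T ^ (q ^ 2 + q + 1) = c • (1 : Matrix (Fin 3) (Fin 3) F)) ∧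
    (∀ i : ℕ, 0 < i → i < q ^ 2 + q + 1 → ¬ ∃ c : F, T ^ i = c • (1 : Matrix (Fin 3) (Fin 3) F)) ∧
    -- the three points Q, Q^q, Q^{q^2} are fixed:
    T.mulVec ![1, τ, τ ^ 2] = τ • ![1, τ, τ ^ 2] ∧
    T.mulVec ![1, τ ^ q, τ ^ (2 * q)] = τ ^ q • ![1, τ ^ q, τ ^ (2 * q)] ∧
    T.mulVec ![1, τ ^ (q ^ 2), τ ^ (2 * q ^ 2)] =
      τ ^ (q ^ 2) • ![1, τ ^ (q ^ 2), τ ^ (2 * q ^ 2)] ∧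
    -- no power T^i with 0 < i < q^2+q+1 fixes any other point:
    (∀ i : ℕ, 0 < i → i < q ^ 2 + q + 1 → ∀ v : Fin 3 → F, v ≠ 0 →
      (∃ c : F, (T ^ i).mulVec v = c • v) →
      (∃ c : F, v = c • ![1, τ, τ ^ 2]) ∨
      (∃ c : F, v = c • ![1, τ ^ q, τ ^ (2 * q)]) ∨
      (∃ c : F, v = c • ![1, τ ^ (q ^ 2), τ ^ (2 * q ^ 2)])) := by
  have hq1 : 1 < q := by
    rw [hq]; exact Nat.one_lt_pow (by omega) hp.two_le
  set N : ℕ := q ^ 2 + q + 1 with hNdef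
  have hN7 : 7 ≤ N := by nlinarith
  have hq3 : 8 ≤ q ^ 3 := by
    calc (8 : ℕ) = 2 ^ 3 := rfl
      _ ≤ q ^ 3 := Nat.pow_le_pow_left (by omega) 3
  have hqq1 : 1 ≤ q ^ 2 := Nat.one_le_pow _ _ (by omega)
  have hqq2 : q ≤ q ^ 2 := Nat.le_self_pow (by omega) q
  have hNfact : (q - 1) * N = q ^ 3 - 1 := aux_nat3 q (by omega)
  have hτ1 : τ ^ (q ^ 3 - 1) = 1 := by rw [← hprim]; exact pow_orderOf_eq_one τ
  have hτ0 : τ ≠ 0 := by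
    intro h
    rw [h, zero_pow (by omega)] at hτ1
    exact one_ne_zero hτ1.symm
  -- criterion for equality of powers of τ
  have hpowiff : ∀ B D : ℕ, τ ^ (B + D) = τ ^ B ↔ (q ^ 3 - 1) ∣ D := by
    intro B D
    rw [pow_add]
    constructor
    · intro h
      have hB : τ ^ B ≠ 0 := pow_ne_zero _ hτ0
      have h1 : τ ^ D = 1 := by
        apply mul_left_cancel₀ hB
        rw [h, mul_one]
      rw [← hprim]
      exact orderOf_dvd_of_pow_eq_one h1
    · rintro ⟨m, rfl⟩
      rw [pow_mul, hτ1, one_pow, mul_one]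
  have hcop1 : Nat.Coprime N (q + 1) := by
    have h1 : N = 1 + (q + 1) * q := by rw [hNdef]; ring
    rw [h1]
    simpa using (Nat.coprime_add_mul_left_left 1 (q + 1) q).mpr (Nat.coprime_one_left _)
  have hcop2 : Nat.Coprime N q := by
    have h1 : N = 1 + q * (q + 1) := by rw [hNdef]; ring
    rw [h1]
    simpa using (Nat.coprime_add_mul_left_left 1 q (q + 1)).mpr (Nat.coprime_one_left _)
  -- the three key inequalities
  have hkey : ∀ i : ℕ, 0 < i → ¬ N ∣ i →
      τ ^ i ≠ τ ^ (q * i) ∧ τ ^ i ≠ τ ^ (q ^ 2 * i) ∧ τ ^ (q * i) ≠ τ ^ (q ^ 2 * i) := by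
    intro i hi hNi
    refine ⟨?_, ?_, ?_⟩
    · intro h
      have e : i + (q - 1) * i = q * i := by
        have : 1 + (q - 1) = q := by omega
        calc i + (q - 1) * i = (1 + (q - 1)) * i := by ring
          _ = q * i := by rw [this]
      rw [← e] at h
      have hd := (hpowiff i _).mp h.symm
      rw [← hNfact] at hd
      exact hNi ((Nat.mul_dvd_mul_iff_left (by omega : 0 < q - 1)).mp hd)
    · intro h
      have e : i + (q ^ 2 - 1) * i = q ^ 2 * i := by
        have : 1 + (q ^ 2 - 1) = q ^ 2 := by omega
        calc i + (q ^ 2 - 1) * i = (1 + (q ^ 2 - 1)) * i := by ring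
          _ = q ^ 2 * i := by rw [this]
      rw [← e] at h
      have hd := (hpowiff i _).mp h.symm
      have e2 : (q ^ 2 - 1) * i = (q - 1) * ((q + 1) * i) := by
        have h2 : (q - 1) * (q + 1) = q ^ 2 - 1 := aux_nat1 q (by omega)
        rw [← h2]; ring
      rw [e2, ← hNfact] at hd
      have hd2 := (Nat.mul_dvd_mul_iff_left (by omega : 0 < q - 1)).mp hd
      exact hNi (hcop1.dvd_of_dvd_mul_left hd2)
    · intro h
      have e : q * i + (q ^ 2 - q) * i = q ^ 2 * i := by
        have : q + (q ^ 2 - q) = q ^ 2 := by omega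
        calc q * i + (q ^ 2 - q) * i = (q + (q ^ 2 - q)) * i := by ring
          _ = q ^ 2 * i := by rw [this]
      rw [← e] at h
      have hd := (hpowiff (q * i) _).mp h.symm
      have e2 : (q ^ 2 - q) * i = (q - 1) * (q * i) := by
        have h2 : (q - 1) * q = q ^ 2 - q := aux_nat2 q (by omega)
        rw [← h2]; ring
      rw [e2, ← hNfact] at hd
      have hd2 := (Nat.mul_dvd_mul_iff_left (by omega : 0 < q - 1)).mp hd
      exact hNi (hcop2.dvd_of_dvd_mul_left hd2)
  have hnotdvd : ∀ i : ℕ, 0 < i → i < N → ¬ N ∣ i := fun i h1 h2 hd =>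
    absurd (Nat.le_of_dvd h1 hd) (by omega)
  -- characteristic and Frobenius
  haveI : Fact p.Prime := ⟨hp⟩
  haveI hchar : CharP F p := by
    have h1 : ((p ^ (n * 3) : ℕ) : F) = 0 := by
      have := FiniteField.cast_card_eq_zero F
      rw [hF, hq, ← pow_mul] at this
      exact this
    have hrc : (ringChar F).Prime := CharP.char_is_prime F (ringChar F)
    have hdvd : ringChar F ∣ p ^ (n * 3) := ringChar.dvd h1
    have : ringChar F = p := (Nat.prime_dvd_prime_iff_eq hrc hp).mp (hrc.dvd_of_dvd_pow hdvd)
    rw [← this]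
    exact ringChar.charP F
  have frobadd : ∀ x y : F, (x + y) ^ q = x ^ q + y ^ q := by
    intro x y
    rw [hq]
    exact add_pow_char_pow x y p n
  have hfix : ∀ a : k, algebraMap k F a ^ q = algebraMap k F a := by
    intro a
    rw [← map_pow, ← hk, FiniteField.pow_card]
  set c0 : F := algebraMap k F t0 with hc0
  set c1 : F := algebraMap k F t1 with hc1
  set c2 : F := algebraMap k F t2 with hc2
  have hroot' : τ ^ 3 = c2 * τ ^ 2 + c1 * τ + c0 := by
    simp only [map_sub, _root_.map_mul, map_pow, aeval_X, aeval_C] at hroot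
    rw [hc0, hc1, hc2]
    linear_combination hroot
  have hstep : ∀ x : F, x ^ 3 = c2 * x ^ 2 + c1 * x + c0 →
      (x ^ q) ^ 3 = c2 * (x ^ q) ^ 2 + c1 * x ^ q + c0 := by
    intro x hx
    have h1 : (x ^ 3) ^ q = (c2 * x ^ 2 + c1 * x + c0) ^ q := by rw [hx]
    rw [frobadd, frobadd, mul_pow, mul_pow, hc0, hc1, hc2, hfix, hfix, hfix] at h1
    calc (x ^ q) ^ 3 = (x ^ 3) ^ q := by rw [← pow_mul, ← pow_mul, mul_comm]
      _ = _ := by rw [h1, ← hc0, ← hc1, ← hc2, pow_right_comm]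
  have hrootq : (τ ^ q) ^ 3 = c2 * (τ ^ q) ^ 2 + c1 * τ ^ q + c0 := hstep τ hroot'
  have hτq2 : τ ^ q ^ 2 = (τ ^ q) ^ q := by rw [← pow_mul, ← pow_two]
  have hrootq2 : (τ ^ q ^ 2) ^ 3 = c2 * (τ ^ q ^ 2) ^ 2 + c1 * τ ^ q ^ 2 + c0 := by
    rw [hτq2]; exact hstep _ hrootq
  clear_value c0 c1 c2
  -- eigenvector equation (as power function)
  have heig : ∀ x : F, x ^ 3 = c2 * x ^ 2 + c1 * x + c0 →
      T.mulVec (fun i : Fin 3 => x ^ (i : ℕ)) = x • fun i : Fin 3 => x ^ (i : ℕ) := by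
    intro x hx
    funext i
    fin_cases i <;>
      simp [hT, Matrix.mulVec, dotProduct, Fin.sum_univ_three, ← hc0, ← hc1, ← hc2] <;>
      (first | ring1 | linear_combination hx | linear_combination -hx)
  have hvec : ∀ x : F, (fun i : Fin 3 => x ^ (i : ℕ)) = ![1, x, x ^ 2] := by
    intro x; funext i; fin_cases i <;> simp
  have hv1 : ![(1 : F), τ ^ q, τ ^ (2 * q)] = ![1, τ ^ q, (τ ^ q) ^ 2] := by
    rw [← pow_mul, mul_comm]
  have hv2 : ![(1 : F), τ ^ q ^ 2, τ ^ (2 * q ^ 2)] = ![1, τ ^ q ^ 2, (τ ^ q ^ 2) ^ 2] := by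
    rw [← pow_mul, mul_comm]
  -- the three eigenvectors
  set x : Fin 3 → F := ![τ, τ ^ q, τ ^ q ^ 2] with hxdef
  have hxroot : ∀ j : Fin 3, (x j) ^ 3 = c2 * (x j) ^ 2 + c1 * (x j) + c0 := by
    intro j
    fin_cases j
    · exact hroot'
    · exact hrootq
    · exact hrootq2
  have hxpow : ∀ (j : Fin 3) (i : ℕ), True := fun _ _ => trivial
  have hx0 : x 0 = τ := rfl
  have hx1 : x 1 = τ ^ q := rfl
  have hx2 : x 2 = τ ^ q ^ 2 := rfl
  have hxipow : ∀ i : ℕ, (x 0) ^ i = τ ^ i ∧ (x 1) ^ i = τ ^ (q * i) ∧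
      (x 2) ^ i = τ ^ (q ^ 2 * i) := by
    intro i
    refine ⟨rfl, ?_, ?_⟩
    · rw [hx1, ← pow_mul]
    · rw [hx2, ← pow_mul]
  have hxinj : ∀ i : ℕ, 0 < i → ¬ N ∣ i → Function.Injective (fun j => (x j) ^ i) := by
    intro i hi hNi
    obtain ⟨k1, k2, k3⟩ := hkey i hi hNi
    obtain ⟨e0, e1, e2⟩ := hxipow i
    exact aux_inj3 _ (by rw [e0, e1]; exact k1) (by rw [e0, e2]; exact k2)
      (by rw [e1, e2]; exact k3)
  have hxinj1 : Function.Injective x := by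
    have h := hxinj 1 one_pos (hnotdvd 1 one_pos (by omega))
    intro a b hab
    exact h (by simp [hab])
  have heigT : ∀ j : Fin 3, T.mulVec (fun i : Fin 3 => x j ^ (i : ℕ)) =
      x j • fun i : Fin 3 => x j ^ (i : ℕ) := fun j => heig (x j) (hxroot j)
  have heigTi : ∀ (m : ℕ) (j : Fin 3), (T ^ m).mulVec (fun i : Fin 3 => x j ^ (i : ℕ)) =
      (x j) ^ m • fun i : Fin 3 => x j ^ (i : ℕ) := fun m j =>
    aux_pow_eig T _ _ (heigT j) m
  refine ⟨?_, ?_, ?_, ?_, ?_, ?_⟩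
  · -- T^N is scalar
    refine ⟨τ ^ N, pow_ne_zero _ hτ0, ?_⟩
    have hval : ∀ j : Fin 3, (x j) ^ N = τ ^ N := by
      intro j
      obtain ⟨e0, e1, e2⟩ := hxipow N
      fin_cases j
      · exact e0
      · show (x 1) ^ N = τ ^ N
        rw [e1]
        have e : N + (q - 1) * N = q * N := by
          have h1 : 1 + (q - 1) = q := by omega
          calc N + (q - 1) * N = (1 + (q - 1)) * N := by ring
            _ = q * N := by rw [h1]
        rw [← e]
        exact (hpowiff N _).mpr hNfact.symm.dvd
      · show (x 2) ^ N = τ ^ N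
        rw [e2]
        have e : N + (q ^ 2 - 1) * N = q ^ 2 * N := by
          have h1 : 1 + (q ^ 2 - 1) = q ^ 2 := by omega
          calc N + (q ^ 2 - 1) * N = (1 + (q ^ 2 - 1)) * N := by ring
            _ = q ^ 2 * N := by rw [h1]
        rw [← e]
        have e2' : (q ^ 2 - 1) * N = (q - 1) * ((q + 1) * N) := by
          have h2 : (q - 1) * (q + 1) = q ^ 2 - 1 := aux_nat1 q (by omega)
          rw [← h2]; ring
        refine ((hpowiff N _).mpr ?_)
        rw [e2', ← hNfact]
        exact mul_dvd_mul_left _ (Dvd.intro_left _ rfl)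
    have := aux_scalar (T ^ N) x hxinj1 (τ ^ N) (by
      intro j
      rw [heigTi N j, hval j])
    exact this
  · -- no smaller power is scalar
    rintro i hi hiN ⟨c, hci⟩
    have h0 : (x 0) ^ i • (fun l : Fin 3 => x 0 ^ (l : ℕ)) =
        c • fun l : Fin 3 => x 0 ^ (l : ℕ) := by
      rw [← heigTi i 0, hci, Matrix.smul_mulVec, Matrix.one_mulVec]
    have h1 : (x 1) ^ i • (fun l : Fin 3 => x 1 ^ (l : ℕ)) =
        c • fun l : Fin 3 => x 1 ^ (l : ℕ) := by
      rw [← heigTi i 1, hci, Matrix.smul_mulVec, Matrix.one_mulVec]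
    have e0 : (x 0) ^ i = c := by
      have := congrFun h0 0
      simpa using this
    have e1 : (x 1) ^ i = c := by
      have := congrFun h1 0
      simpa using this
    obtain ⟨f0, f1, _⟩ := hxipow i
    obtain ⟨k1, _, _⟩ := hkey i hi (hnotdvd i hi hiN)
    exact k1 (by rw [← f0, ← f1, e0, e1])
  · rw [← hvec τ]
    exact heig τ hroot'
  · rw [hv1, ← hvec (τ ^ q)]
    exact heig _ hrootq
  · rw [hv2, ← hvec (τ ^ q ^ 2)]
    exact heig _ hrootq2
  · -- classification of fixed points
    rintro i hi hiN v hv ⟨c, hc⟩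
    obtain ⟨j, a, hva⟩ := aux_classify (T ^ i) x (fun j => (x j) ^ i) hxinj1
      (hxinj i hi (hnotdvd i hi hiN)) (fun j => heigTi i j) v hv c hc
    fin_cases j
    · left
      refine ⟨a, ?_⟩
      rw [hva, hvec]
      show a • ![1, x 0, x 0 ^ 2] = a • ![1, τ, τ ^ 2]
      rw [hx0]
    · right; left
      refine ⟨a, ?_⟩
      rw [hva, hvec]
      show a • ![1, x 1, x 1 ^ 2] = a • ![1, τ ^ q, τ ^ (2 * q)]
      rw [hx1, hv1]
    · right; right
      refine ⟨a, ?_⟩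
      rw [hva, hvec]
      show a • ![1, x 2, x 2 ^ 2] = a • ![1, τ ^ q ^ 2, τ ^ (2 * q ^ 2)]
      rw [hx2, hv2]
end

section
/- The stabilizer in PGL(3,q) of the point P = (1,1,τ) of PG(2,q^3), where τ ∉ GF(q), has order q^2(q-1); consequently the orbit of P under PGL(3,q) has size q(q^3-1)(q+1). -/
/-!
Write `v = (1, 1, τ)`. Since `[F : k] = 3` is prime and `τ ∉ k`, the elements `1, τ, τ²` are
linearly independent over `k`, so comparing coordinates in `B v = c v` shows that the stabilizer
of the point `⟨v⟩` in `GL(3, q)` consists of the matrices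
`[[u + b, s - (u + b), 0], [b, s - b, 0], [-g, g, s]]` with `s, u ≠ 0` (the determinant is
`s² u`); it has order `(q - 1)² q²`. It contains the `q - 1` scalar matrices, i.e. the centre,
so its image in `PGL(3, q)` has order `q² (q - 1)`, and by orbit–stabilizer the orbit of `⟨v⟩`
has `|GL(3, q)| / ((q - 1)² q²) = q (q³ - 1) (q + 1)` points.
-/

open Matrix Polynomial Module IntermediateField Pointwise MulAction
open scoped Matrix.Module

section FieldTheory

variable {k F : Type*} [Field k] [Field F] [Algebra k F]

theorem finrank_eq_of_card_eq_pow [Fintype k] [Fintype F] {d : ℕ}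
    (hF : Fintype.card F = Fintype.card k ^ d) : finrank k F = d :=
  Nat.pow_right_injective Fintype.one_lt_card (card_eq_pow_finrank.symm.trans hF)

theorem natDegree_minpoly_eq_finrank_of_prime [FiniteDimensional k F]
    (hprime : (finrank k F).Prime) {τ : F} (hτ : τ ∉ Set.range (algebraMap k F)) :
    (minpoly k τ).natDegree = finrank k F := by
  have hdvd : finrank k k⟮τ⟯ ∣ finrank k F :=
    ⟨finrank k⟮τ⟯ F, (finrank_mul_finrank k k⟮τ⟯ F).symm⟩
  have hne : finrank k k⟮τ⟯ ≠ 1 :=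
    fun h ↦ hτ (mem_bot.mp (finrank_adjoin_simple_eq_one_iff.mp h))
  rw [← adjoin.finrank (IsIntegral.of_finite k τ)]
  exact (hprime.eq_one_or_self_of_dvd _ hdvd).resolve_left hne

theorem eq_zero_of_add_mul_add_mul_sq_eq_zero {τ : F} (hτ : 2 < (minpoly k τ).natDegree)
    {a b c : k} (h : algebraMap k F a + algebraMap k F b * τ + algebraMap k F c * τ ^ 2 = 0) :
    a = 0 ∧ b = 0 ∧ c = 0 := by
  set P : k[X] := C a + C b * X + C c * X ^ 2
  have hP : P = 0 := by
    by_contra hP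
    have hdeg : P.natDegree ≤ 2 := by simp only [P]; compute_degree
    have := natDegree_le_natDegree (minpoly.degree_le_of_ne_zero k τ hP (by simpa [P] using h))
    omega
  refine ⟨?_, ?_, ?_⟩
  · simpa [P] using congrArg (coeff · 0) hP
  · simpa [P] using congrArg (coeff · 1) hP
  · simpa [P] using congrArg (coeff · 2) hP

end FieldTheory

section PuncturedLine

variable (F : Type*) {G V : Type*} [Field F] [AddCommGroup V] [Module F V]

/-- The point of the projective space `ℙ(V)` spanned by `v`, as the set of its representatives. -/
def puncturedLine (v : V) : Set V := {w | ∃ c : F, c ≠ 0 ∧ w = c • v}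

variable {F}

theorem mem_puncturedLine_self (v : V) : v ∈ puncturedLine F v :=
  ⟨1, one_ne_zero, (one_smul F v).symm⟩

theorem puncturedLine_smul {c : F} (hc : c ≠ 0) (v : V) :
    puncturedLine F (c • v) = puncturedLine F v := by
  ext w
  constructor
  · rintro ⟨d, hd, rfl⟩
    exact ⟨d * c, mul_ne_zero hd hc, (mul_smul d c v).symm⟩
  · rintro ⟨d, hd, rfl⟩
    exact ⟨d * c⁻¹, mul_ne_zero hd (inv_ne_zero hc),
      by rw [smul_smul, inv_mul_cancel_right₀ hc]⟩

variable [Group G] [DistribMulAction G V] [SMulCommClass G F V]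

theorem smul_puncturedLine (g : G) (v : V) :
    g • puncturedLine F v = puncturedLine F (g • v) := by
  ext w
  simp only [Set.mem_smul_set, puncturedLine, Set.mem_ofPred_eq]
  constructor
  · rintro ⟨_, ⟨c, hc, rfl⟩, rfl⟩
    exact ⟨c, hc, smul_comm g c v⟩
  · rintro ⟨c, hc, rfl⟩
    exact ⟨c • v, ⟨c, hc, rfl⟩, smul_comm g c v⟩

theorem mem_stabilizer_puncturedLine_iff (g : G) (v : V) :
    g ∈ stabilizer G (puncturedLine F v) ↔ ∃ c : F, g • v = c • v := by
  rw [mem_stabilizer_iff, smul_puncturedLine]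
  constructor
  · intro h
    obtain ⟨c, -, hc⟩ := h ▸ mem_puncturedLine_self (F := F) (g • v)
    exact ⟨c, hc⟩
  · rintro ⟨c, hc⟩
    rcases eq_or_ne c 0 with rfl | hc0
    · rw [zero_smul, smul_eq_zero_iff_eq] at hc
      rw [hc, smul_zero]
    · rw [hc, puncturedLine_smul hc0]

end PuncturedLine

instance {ι R S M : Type*} [Ring R] [Fintype ι] [DecidableEq ι] [AddCommGroup M] [Module R M]
    [Monoid S] [DistribMulAction S M] [SMulCommClass R S M] :
    SMulCommClass (Matrix ι ι R) S (ι → M) where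
  smul_comm A c v := by
    ext i
    simp only [Matrix.Module.smul_apply, Pi.smul_apply, Finset.smul_sum, smul_comm (_ : R) c]

namespace Matrix.GeneralLinearGroup

variable {n R F : Type*} [Fintype n] [DecidableEq n] [CommRing R] [Field F] [Algebra R F]

theorem smul_eq_map_mulVec {S : Type*} [CommRing S] [Algebra R S] (B : GL n R) (v : n → S) :
    B • v = (B : Matrix n n R).map (algebraMap R S) *ᵥ v := by
  ext i
  simp [Units.smul_def, mulVec, dotProduct, Algebra.smul_def]

theorem center_le_stabilizer_puncturedLine (v : n → F) :
    Subgroup.center (GL n R) ≤ stabilizer (GL n R) (puncturedLine F v) := by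
  intro B hB
  obtain ⟨u, rfl⟩ := center_eq_range_scalar.le hB
  rw [mem_stabilizer_puncturedLine_iff]
  exact ⟨algebraMap R F u, by
    rw [Units.smul_def, coe_scalar, Module.scalar_smul, algebraMap_smul]⟩

theorem card_center [Nonempty n] : Nat.card (Subgroup.center (GL n R)) = Nat.card Rˣ := by
  have hinj : Function.Injective (scalar n : Rˣ →* GL n R) := fun u u' h ↦ by
    have i := Classical.arbitrary n
    exact Units.ext (by simpa using congrArg (fun B : GL n R ↦ (B : Matrix n n R) i i) h)
  rw [center_eq_range_scalar]
  exact Nat.card_congr (MonoidHom.ofInjective hinj).toEquiv.symm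

end Matrix.GeneralLinearGroup

section Stabilizer

variable {k F : Type*} [Field k] [Field F] [Algebra k F]

def stabilizerMatrix (s u b g : k) : Matrix (Fin 3) (Fin 3) k :=
  !![u + b, s - (u + b), 0; b, s - b, 0; -g, g, s]

theorem det_stabilizerMatrix (s u b g : k) : (stabilizerMatrix s u b g).det = s ^ 2 * u := by
  simp [stabilizerMatrix, det_fin_three]; ring

theorem map_stabilizerMatrix_mulVec (τ : F) (s u b g : k) :
    (stabilizerMatrix s u b g).map (algebraMap k F) *ᵥ ![1, 1, τ]
      = algebraMap k F s • ![1, 1, τ] := by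
  ext i; fin_cases i <;> simp [stabilizerMatrix, mulVec, dotProduct, Fin.sum_univ_three]

theorem eq_stabilizerMatrix_of_map_mulVec_eq_smul {τ : F} (hτ : 2 < (minpoly k τ).natDegree)
    {A : Matrix (Fin 3) (Fin 3) k} {c : F}
    (hA : A.map (algebraMap k F) *ᵥ ![1, 1, τ] = c • ![1, 1, τ]) :
    A = stabilizerMatrix (A 2 2) (A 0 0 - A 1 0) (A 1 0) (A 2 1) := by
  -- eliminating `c` between the rows gives `k`-linear relations among `1, τ, τ²`
  set f := algebraMap k F
  have row (i : Fin 3) : f (A i 0) + f (A i 1) + f (A i 2) * τ = c * ![1, 1, τ] i := by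
    simpa [mulVec, dotProduct, Fin.sum_univ_three, add_assoc] using congrFun hA i
  have e0 : f (A 0 0) + f (A 0 1) + f (A 0 2) * τ = c := by simpa using row 0
  have e1 : f (A 1 0) + f (A 1 1) + f (A 1 2) * τ = c := by simpa using row 1
  have e2 : f (A 2 0) + f (A 2 1) + f (A 2 2) * τ = c * τ := by simpa using row 2
  obtain ⟨h20, h22, h02⟩ := eq_zero_of_add_mul_add_mul_sq_eq_zero hτ
    (a := A 2 0 + A 2 1) (b := A 2 2 - A 0 0 - A 0 1) (c := -A 0 2)
    (by simp only [map_add, map_sub, map_neg]; linear_combination e2 - τ * e0)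
  obtain ⟨h10, h12, -⟩ := eq_zero_of_add_mul_add_mul_sq_eq_zero hτ
    (a := A 1 0 + A 1 1 - A 0 0 - A 0 1) (b := A 1 2 - A 0 2) (c := 0)
    (by simp only [map_add, map_sub, map_zero]; linear_combination e1 - e0)
  have h02' : A 0 2 = 0 := by linear_combination -h02
  have h12' : A 1 2 = 0 := by linear_combination h12 - h02
  have h01 : A 0 1 = A 2 2 - A 0 0 := by linear_combination -h22
  have h11 : A 1 1 = A 2 2 - A 1 0 := by linear_combination h10 - h22
  have h20' : A 2 0 = -A 2 1 := by linear_combination h20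
  ext i j
  fin_cases i <;> fin_cases j <;> simp [stabilizerMatrix, h02', h12', h01, h11, h20']

theorem mem_stabilizer_puncturedLine_iff_eq_stabilizerMatrix {τ : F}
    (hτ : 2 < (minpoly k τ).natDegree) (B : GL (Fin 3) k) :
    B ∈ stabilizer (GL (Fin 3) k) (puncturedLine F ![1, 1, τ]) ↔
      (B : Matrix (Fin 3) (Fin 3) k) =
        stabilizerMatrix (B 2 2) (B 0 0 - B 1 0) (B 1 0) (B 2 1) := by
  rw [mem_stabilizer_puncturedLine_iff, GeneralLinearGroup.smul_eq_map_mulVec]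
  constructor
  · rintro ⟨c, hc⟩
    exact eq_stabilizerMatrix_of_map_mulVec_eq_smul hτ hc
  · intro hB
    exact ⟨_, hB ▸ map_stabilizerMatrix_mulVec τ _ _ _ _⟩

noncomputable def stabilizerEquiv {τ : F} (hτ : 2 < (minpoly k τ).natDegree) :
    stabilizer (GL (Fin 3) k) (puncturedLine F ![1, 1, τ]) ≃ kˣ × kˣ × k × k where
  toFun B :=
    have hdet : B.1 2 2 ^ 2 * (B.1 0 0 - B.1 1 0) ≠ 0 := by
      rw [← det_stabilizerMatrix _ _ (B.1 1 0) (B.1 2 1),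
        ← (mem_stabilizer_puncturedLine_iff_eq_stabilizerMatrix hτ B.1).mp B.2]
      exact B.1.isUnit.map detMonoidHom |>.ne_zero
    (Units.mk0 _ (pow_ne_zero_iff two_ne_zero |>.mp (left_ne_zero_of_mul hdet)),
      Units.mk0 _ (right_ne_zero_of_mul hdet), B.1 1 0, B.1 2 1)
  invFun x :=
    ⟨GeneralLinearGroup.mkOfDetNeZero (stabilizerMatrix x.1 x.2.1 x.2.2.1 x.2.2.2) (by
      rw [det_stabilizerMatrix]; exact mul_ne_zero (pow_ne_zero 2 x.1.ne_zero) x.2.1.ne_zero), by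
      rw [mem_stabilizer_puncturedLine_iff_eq_stabilizerMatrix hτ]
      simp [stabilizerMatrix]⟩
  left_inv B := Subtype.ext <| Units.ext <| by
    simpa using ((mem_stabilizer_puncturedLine_iff_eq_stabilizerMatrix hτ B.1).mp B.2).symm
  right_inv x := by simp [stabilizerMatrix]

end Stabilizer

theorem Subgroup.card_map_mk'_mul_card {G : Type*} [Group G] [Finite G] {N H : Subgroup G}
    [N.Normal] (hNH : N ≤ H) :
    Nat.card (H.map (QuotientGroup.mk' N)) * Nat.card N = Nat.card H := by
  have hindex : (H.map (QuotientGroup.mk' N)).index = H.index :=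
    H.index_map_eq (QuotientGroup.mk'_surjective N) (by rwa [QuotientGroup.ker_mk'])
  refine mul_right_cancel₀ H.index_ne_zero_of_finite ?_
  rw [card_mul_index, mul_right_comm, ← hindex, card_mul_index,
    ← card_eq_card_quotient_mul_card_subgroup]

theorem Matrix.card_GL_fin_three {k : Type*} [Field k] [Fintype k] {q : ℕ}
    (hk : Fintype.card k = q) :
    Nat.card (GL (Fin 3) k) = q ^ 3 * (q ^ 3 - 1) * (q ^ 2 - 1) * (q - 1) := by
  have : 1 ≤ q := hk ▸ Fintype.card_pos
  have : q ≤ q ^ 3 := Nat.le_self_pow (by norm_num) q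
  have : q ^ 2 ≤ q ^ 3 := Nat.pow_le_pow_right (by omega) (by norm_num)
  have : 1 ≤ q ^ 2 := Nat.one_le_pow _ _ (by omega)
  have : 1 ≤ q ^ 3 := Nat.one_le_pow _ _ (by omega)
  rw [card_GL_field, hk, Fin.prod_univ_three]
  simp only [Fin.val_zero, Fin.val_one, Fin.val_two, pow_zero, pow_one]
  zify [*]
  ring

theorem orbit_puncturedLine_eq {n R F : Type*} [Fintype n] [DecidableEq n] [CommRing R]
    [Field F] [Algebra R F] (v : n → F) :
    orbit (GL n R) (puncturedLine F v) = {S | ∃ B : GL n R,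
      S = {w | ∃ c : F, c ≠ 0 ∧
        w = c • ((B : Matrix n n R).map (algebraMap R F)).mulVec v}} := by
  ext S
  simp only [orbit, Set.mem_range, smul_puncturedLine, GeneralLinearGroup.smul_eq_map_mulVec,
    eq_comm]
  rfl

theorem stmt7_general (q : ℕ)
    (k F : Type) [Field k] [Field F] [Algebra k F] [Fintype k] [Fintype F]
    (hk : Fintype.card k = q) (hF : Fintype.card F = q ^ 3)
    (τ : F) (hτ : τ ∉ Set.range (algebraMap k F)) :
    ∃ H : Subgroup (GL (Fin 3) k),
      (∀ B : GL (Fin 3) k, B ∈ H ↔ ∃ c : F,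
        ((B : Matrix (Fin 3) (Fin 3) k).map (algebraMap k F)).mulVec ![1, 1, τ]
          = c • ![1, 1, τ]) ∧
      Nat.card (Subgroup.map (QuotientGroup.mk' (Subgroup.center (GL (Fin 3) k))) H)
        = q ^ 2 * (q - 1) ∧
      Set.ncard {S : Set (Fin 3 → F) | ∃ B : GL (Fin 3) k,
          S = {w | ∃ c : F, c ≠ 0 ∧
            w = c • ((B : Matrix (Fin 3) (Fin 3) k).map (algebraMap k F)).mulVec ![1, 1, τ]}}
        = q * (q ^ 3 - 1) * (q + 1) := by
  set H := stabilizer (GL (Fin 3) k) (puncturedLine F ![1, 1, τ])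
  have hfinrank : finrank k F = 3 := finrank_eq_of_card_eq_pow (hk ▸ hF)
  have hdeg : 2 < (minpoly k τ).natDegree := by
    rw [natDegree_minpoly_eq_finrank_of_prime (hfinrank ▸ Nat.prime_three) hτ]; omega
  have hcardH : Nat.card H = (q - 1) * (q - 1) * q * q := by
    rw [Nat.card_congr (stabilizerEquiv hdeg)]
    simp [Nat.card_units, Nat.card_eq_fintype_card, hk, mul_assoc]
  have hcardZ : Nat.card (Subgroup.center (GL (Fin 3) k)) = q - 1 := by
    rw [GeneralLinearGroup.card_center, Nat.card_units, Nat.card_eq_fintype_card, hk]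
  refine ⟨H, fun B ↦ by
    rw [mem_stabilizer_puncturedLine_iff, GeneralLinearGroup.smul_eq_map_mulVec], ?_, ?_⟩
  · refine Nat.eq_of_mul_eq_mul_right Nat.card_pos <|
      (Subgroup.card_map_mk'_mul_card
        (GeneralLinearGroup.center_le_stabilizer_puncturedLine (F := F) ![1, 1, τ])).trans ?_
    rw [hcardH, hcardZ]
    ring
  · rw [← orbit_puncturedLine_eq, ← index_stabilizer]
    refine Nat.eq_of_mul_eq_mul_right Nat.card_pos (H.index_mul_card.trans ?_)
    have hq : 1 ≤ q := hk ▸ Fintype.card_pos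
    have : 1 ≤ q ^ 2 := Nat.one_le_pow _ _ hq
    have : 1 ≤ q ^ 3 := Nat.one_le_pow _ _ hq
    rw [hcardH, card_GL_fin_three hk]
    zify [*]
    ring

/-- The stabilizer in PGL(3,q) of the point P = (1,1,τ) of PG(2,q^3),
where τ ∉ GF(q), has order q^2(q-1); hence the orbit of P under PGL(3,q) has size
q(q^3-1)(q+1). Orbit points are recorded as full sets of nonzero scalar multiples of a
representative vector. -/
theorem stmt7 (p n q : ℕ) (hp : p.Prime) (hn : 0 < n) (hq : q = p ^ n)
    (k F : Type) [Field k] [Field F] [Algebra k F] [Fintype k] [Fintype F]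
    (hk : Fintype.card k = q) (hF : Fintype.card F = q ^ 3)
    (τ : F) (hτ : τ ∉ Set.range (algebraMap k F)) :
    ∃ H : Subgroup (GL (Fin 3) k),
      (∀ B : GL (Fin 3) k, B ∈ H ↔ ∃ c : F,
        ((B : Matrix (Fin 3) (Fin 3) k).map (algebraMap k F)).mulVec ![1, 1, τ]
          = c • ![1, 1, τ]) ∧
      Nat.card (Subgroup.map (QuotientGroup.mk' (Subgroup.center (GL (Fin 3) k))) H)
        = q ^ 2 * (q - 1) ∧
      Set.ncard {S : Set (Fin 3 → F) | ∃ B : GL (Fin 3) k,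
          S = {w | ∃ c : F, c ≠ 0 ∧
            w = c • ((B : Matrix (Fin 3) (Fin 3) k).map (algebraMap k F)).mulVec ![1, 1, τ]}}
        = q * (q ^ 3 - 1) * (q + 1) :=
  stmt7_general q k F hk hF τ hτ
end

section
/- The number of points of PG(2,q^3) lying on exactly one extended line of the subplane PG(2,q) but not in PG(2,q) is q(q^3-1)(q+1), and the number of points lying on no extended line of PG(2,q) is q^3(q^2-1)(q-1). -/
open Matrix Projectivization

/- ### Generic helpers -/

instance projFinite (K V : Type*) [DivisionRing K] [AddCommGroup V] [Module K V] [Finite V] :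
    Finite (Projectivization K V) := by
  have : Finite {v : V // v ≠ 0} := Subtype.finite
  exact Quotient.finite _

lemma proj_card_mul (K V : Type*) [Field K] [AddCommGroup V] [Module K V] [Finite K] [Finite V]
    (W : Submodule K V) :
    Nat.card {x : Projectivization K V // x.rep ∈ W} * (Nat.card K - 1)
      = Nat.card W - 1 := by
  classical
  set S := {v : V // v ∈ W ∧ v ≠ 0} with hS
  have hf : ∀ s : S, (Projectivization.mk K s.1 s.2.2).rep ∈ W := by
    intro s
    obtain ⟨a, ha⟩ := exists_smul_eq_mk_rep K s.1 s.2.2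
    rw [← ha, Units.smul_def]
    exact W.smul_mem _ s.2.1
  let f : S → {x : Projectivization K V // x.rep ∈ W} := fun s => ⟨_, hf s⟩
  have hfib : ∀ x : {x : Projectivization K V // x.rep ∈ W}, {s : S // f s = x} ≃ Kˣ := by
    intro x
    have hmk : ∀ a : Kˣ, Projectivization.mk K ((a : K) • x.1.rep)
        (smul_ne_zero (Units.ne_zero a) x.1.rep_nonzero) = x.1 := by
      intro a
      rw [(mk_eq_mk_iff' K _ _ _ x.1.rep_nonzero).2 ⟨(a : K), rfl⟩, mk_rep]
    let g : Kˣ → {s : S // f s = x} := fun a =>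
      ⟨⟨(a : K) • x.1.rep, W.smul_mem _ x.2,
        smul_ne_zero (Units.ne_zero a) x.1.rep_nonzero⟩,
       Subtype.ext (hmk a)⟩
    have hbij : Function.Bijective g := by
      constructor
      · intro a b hab
        have h2 : (a : K) • x.1.rep = (b : K) • x.1.rep :=
          congrArg (fun s => (s.1.1 : V)) hab
        exact Units.ext (smul_left_injective K x.1.rep_nonzero h2)
      · rintro ⟨⟨v, hvW, hv0⟩, hfs⟩
        have h3 : Projectivization.mk K v hv0 = Projectivization.mk K x.1.rep x.1.rep_nonzero := by
          rw [mk_rep]; exact congrArg Subtype.val hfs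
        obtain ⟨a, ha⟩ := (mk_eq_mk_iff K _ _ hv0 x.1.rep_nonzero).1 h3
        exact ⟨a, by apply Subtype.ext; apply Subtype.ext; exact ha⟩
    exact (Equiv.ofBijective g hbij).symm
  have h1 : Nat.card S = Nat.card {x : Projectivization K V // x.rep ∈ W} * Nat.card Kˣ := by
    rw [← Nat.card_prod]
    exact Nat.card_congr ((Equiv.sigmaFiberEquiv f).symm.trans
      ((Equiv.sigmaCongrRight hfib).trans (Equiv.sigmaEquivProd _ _)))
  have h2 : Nat.card S = Nat.card W - 1 := by
    have e2 : S ≃ {w : W // ¬ w = 0} :=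
      ⟨fun s => ⟨⟨s.1, s.2.1⟩, fun h => s.2.2 (congrArg Subtype.val h)⟩,
       fun w => ⟨w.1.1, w.1.2, fun h => w.2 (Subtype.ext h)⟩,
       fun s => rfl, fun w => rfl⟩
    rw [Nat.card_congr e2]
    have := Fintype.ofFinite W
    rw [Nat.card_eq_fintype_card, Nat.card_eq_fintype_card,
      Fintype.card_subtype_compl (fun w : W => w = 0), Fintype.card_subtype_eq (0 : W)]
  have h3 : Nat.card Kˣ = Nat.card K - 1 := by
    have := Fintype.ofFinite K
    rw [Nat.card_eq_fintype_card, Nat.card_eq_fintype_card, Fintype.card_units]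
  rw [← h3, ← h1, h2]

lemma card_ker (K V : Type*) [Field K] [AddCommGroup V] [Module K V]
    (f : V →ₗ[K] K) (v : V) (hv : f v ≠ 0) :
    Nat.card V = Nat.card K * Nat.card (LinearMap.ker f) := by
  set u : V := (f v)⁻¹ • v with hu
  have hfu : f u = 1 := by simp [hu, _root_.map_smul, inv_mul_cancel₀ hv]
  have e : V ≃ K × LinearMap.ker f := by
    refine ⟨fun w => (f w, ⟨w - f w • u, by simp [LinearMap.mem_ker, hfu]⟩),
      fun p => p.1 • u + p.2.1, fun w => ?_, fun p => ?_⟩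
    · simp only
      abel
    · obtain ⟨c, w, hw⟩ := p
      have hw' : f w = 0 := hw
      refine Prod.ext (by simp [hfu, hw']) (Subtype.ext ?_)
      simp [hfu, hw']
  rw [Nat.card_congr e, Nat.card_prod]

def cr {K : Type*} [Field K] (a b : Fin 3 → K) : Fin 3 → K :=
  ![a 1 * b 2 - a 2 * b 1, a 2 * b 0 - a 0 * b 2, a 0 * b 1 - a 1 * b 0]

lemma cr_eq_zero {K : Type*} [Field K] {a b : Fin 3 → K} (ha : a ≠ 0) (h : cr a b = 0) :
    ∃ c : K, b = c • a := by
  have h0 := congrFun h 0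
  have h1 := congrFun h 1
  have h2 := congrFun h 2
  simp [cr] at h0 h1 h2
  obtain ⟨i, hi⟩ := Function.ne_iff.1 ha
  simp only [Pi.zero_apply] at hi
  fin_cases i
  · have hi' : a 0 ≠ 0 := hi
    refine ⟨b 0 / a 0, funext fun j => ?_⟩
    fin_cases j
    · show b 0 = b 0 / a 0 * a 0; field_simp
    · show b 1 = b 0 / a 0 * a 1; field_simp; linear_combination h2
    · show b 2 = b 0 / a 0 * a 2; field_simp; linear_combination -h1
  · have hi' : a 1 ≠ 0 := hi
    refine ⟨b 1 / a 1, funext fun j => ?_⟩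
    fin_cases j
    · show b 0 = b 1 / a 1 * a 0; field_simp; linear_combination -h2
    · show b 1 = b 1 / a 1 * a 1; field_simp
    · show b 2 = b 1 / a 1 * a 2; field_simp; linear_combination h0
  · have hi' : a 2 ≠ 0 := hi
    refine ⟨b 2 / a 2, funext fun j => ?_⟩
    fin_cases j
    · show b 0 = b 2 / a 2 * a 0; field_simp; linear_combination h1
    · show b 1 = b 2 / a 2 * a 1; field_simp; linear_combination -h0
    · show b 2 = b 2 / a 2 * a 2; field_simp

lemma keylem {k F : Type*} [Field k] [Field F] [Algebra k F] (L L' : Fin 3 → k) (x : Fin 3 → F)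
    (hL : ∑ i, algebraMap k F (L i) * x i = 0)
    (hL' : ∑ i, algebraMap k F (L' i) * x i = 0)
    (hw : cr L L' ≠ 0) :
    ∃ c : F, x = c • (fun i => algebraMap k F (cr L L' i)) := by
  set e := algebraMap k F with he
  have hinj : Function.Injective e := RingHom.injective e
  rw [Fin.sum_univ_three] at hL hL'
  have r01 : x 0 * e (cr L L' 1) = x 1 * e (cr L L' 0) := by
    simp only [cr, Matrix.cons_val_zero, Matrix.cons_val_one, Matrix.head_cons,
      Matrix.cons_val_two, Matrix.tail_cons, _root_.map_sub, _root_.map_mul]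
    linear_combination e (L 2) * hL' - e (L' 2) * hL
  have r02 : x 0 * e (cr L L' 2) = x 2 * e (cr L L' 0) := by
    simp only [cr, Matrix.cons_val_zero, Matrix.cons_val_one, Matrix.head_cons,
      Matrix.cons_val_two, Matrix.tail_cons, _root_.map_sub, _root_.map_mul]
    linear_combination e (L' 1) * hL - e (L 1) * hL'
  have r12 : x 1 * e (cr L L' 2) = x 2 * e (cr L L' 1) := by
    simp only [cr, Matrix.cons_val_zero, Matrix.cons_val_one, Matrix.head_cons,
      Matrix.cons_val_two, Matrix.tail_cons, _root_.map_sub, _root_.map_mul]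
    linear_combination e (L 0) * hL' - e (L' 0) * hL
  obtain ⟨j, hj⟩ := Function.ne_iff.1 hw
  simp only [Pi.zero_apply] at hj
  fin_cases j
  · have hj' : cr L L' 0 ≠ 0 := hj
    have hej : e (cr L L' 0) ≠ 0 := fun h => hj' (hinj (by simpa using h))
    refine ⟨x 0 / e (cr L L' 0), funext fun i => ?_⟩
    fin_cases i
    · show x 0 = x 0 / e (cr L L' 0) * e (cr L L' 0); field_simp
    · show x 1 = x 0 / e (cr L L' 0) * e (cr L L' 1)
      rw [div_mul_eq_mul_div, eq_div_iff hej]; linear_combination -r01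
    · show x 2 = x 0 / e (cr L L' 0) * e (cr L L' 2)
      rw [div_mul_eq_mul_div, eq_div_iff hej]; linear_combination -r02
  · have hj' : cr L L' 1 ≠ 0 := hj
    have hej : e (cr L L' 1) ≠ 0 := fun h => hj' (hinj (by simpa using h))
    refine ⟨x 1 / e (cr L L' 1), funext fun i => ?_⟩
    fin_cases i
    · show x 0 = x 1 / e (cr L L' 1) * e (cr L L' 0)
      rw [div_mul_eq_mul_div, eq_div_iff hej]; linear_combination r01
    · show x 1 = x 1 / e (cr L L' 1) * e (cr L L' 1); field_simp
    · show x 2 = x 1 / e (cr L L' 1) * e (cr L L' 2)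
      rw [div_mul_eq_mul_div, eq_div_iff hej]; linear_combination -r12
  · have hj' : cr L L' 2 ≠ 0 := hj
    have hej : e (cr L L' 2) ≠ 0 := fun h => hj' (hinj (by simpa using h))
    refine ⟨x 2 / e (cr L L' 2), funext fun i => ?_⟩
    fin_cases i
    · show x 0 = x 2 / e (cr L L' 2) * e (cr L L' 0)
      rw [div_mul_eq_mul_div, eq_div_iff hej]; linear_combination r02
    · show x 1 = x 2 / e (cr L L' 2) * e (cr L L' 1)
      rw [div_mul_eq_mul_div, eq_div_iff hej]; linear_combination r12
    · show x 2 = x 2 / e (cr L L' 2) * e (cr L L' 2); field_simp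

def formL {K : Type*} [Field K] (M : Fin 3 → K) : (Fin 3 → K) →ₗ[K] K where
  toFun w := ∑ i, M i * w i
  map_add' u w := by simp [mul_add, Finset.sum_add_distrib]
  map_smul' a w := by
    simp only [Pi.smul_apply, smul_eq_mul, RingHom.id_apply, Finset.mul_sum]
    exact Finset.sum_congr rfl fun i _ => by ring

lemma card_sigma_const {ι : Type*} [Finite ι] (g : ι → Type*) [∀ i, Finite (g i)] (m : ℕ)
    (h : ∀ i, Nat.card (g i) = m) : Nat.card (Σ i, g i) = Nat.card ι * m := by
  have := Fintype.ofFinite ι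
  have := fun i => Fintype.ofFinite (g i)
  rw [Nat.card_eq_fintype_card, Nat.card_eq_fintype_card, Fintype.card_sigma]
  calc ∑ i, Fintype.card (g i) = ∑ _i : ι, m :=
        Finset.sum_congr rfl fun i _ => by rw [← Nat.card_eq_fintype_card, h i]
    _ = Fintype.card ι * m := by simp [mul_comm]

lemma card_on_line (K : Type*) [Field K] [Fintype K] (M : Fin 3 → K) (hM : M ≠ 0) :
    Nat.card {x : Projectivization K (Fin 3 → K) // ∑ i, M i * x.rep i = 0}
      * (Fintype.card K - 1) = Fintype.card K ^ 2 - 1 := by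
  obtain ⟨j, hj⟩ := Function.ne_iff.1 hM
  simp only [Pi.zero_apply] at hj
  have hfv : formL M (Pi.single j 1) ≠ 0 := by
    simpa [formL, Pi.single_apply, Finset.sum_ite_eq'] using hj
  have h2 := card_ker K _ (formL M) (Pi.single j 1) hfv
  have hV : Nat.card (Fin 3 → K) = Fintype.card K ^ 3 := by
    simp [Nat.card_eq_fintype_card]
  have hK : Nat.card K = Fintype.card K := Nat.card_eq_fintype_card
  rw [hV, hK] at h2
  have hker : Nat.card (LinearMap.ker (formL M)) = Fintype.card K ^ 2 := by
    have hpos : 0 < Fintype.card K := Fintype.card_pos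
    have h3 : Fintype.card K * Fintype.card K ^ 2
        = Fintype.card K * Nat.card (LinearMap.ker (formL M)) := by
      rw [← h2]; ring
    exact (Nat.eq_of_mul_eq_mul_left hpos h3).symm
  have h1 := proj_card_mul K (Fin 3 → K) (LinearMap.ker (formL M))
  rw [hker, hK] at h1
  rw [← h1]
  congr 1

lemma card_proj_plane (K : Type*) [Field K] [Fintype K] :
    Nat.card (Projectivization K (Fin 3 → K)) * (Fintype.card K - 1)
      = Fintype.card K ^ 3 - 1 := by
  have h := proj_card_mul K (Fin 3 → K) ⊤
  rw [Nat.card_congr (Equiv.subtypeUnivEquiv (fun x => Submodule.mem_top)),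
    Nat.card_congr Submodule.topEquiv.toEquiv] at h
  have hV : Nat.card (Fin 3 → K) = Fintype.card K ^ 3 := by simp [Nat.card_eq_fintype_card]
  have hK : Nat.card K = Fintype.card K := Nat.card_eq_fintype_card
  rw [hV, hK] at h
  exact h

lemma nat_resolve {X Y c D : ℕ} (hc : 0 < c) (h : X * c = D) (key : Y * c = D) : X = Y :=
  Nat.eq_of_mul_eq_mul_right hc (h.trans key.symm)

/- ### The subplane and lines predicates -/

section plane
variable (k F : Type*) [Field k] [Field F] [Algebra k F]

def subP (x : Projectivization F (Fin 3 → F)) : Prop :=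
  ∃ v : Fin 3 → k, v ≠ 0 ∧ ∃ c : F, x.rep = c • (fun i => algebraMap k F (v i))

def onLP (L : Fin 3 → k) (x : Projectivization F (Fin 3 → F)) : Prop :=
  ∑ i, algebraMap k F (L i) * x.rep i = 0

variable {k F}

lemma emb_ne_zero {v : Fin 3 → k} (hv : v ≠ 0) :
    (fun i => algebraMap k F (v i)) ≠ 0 := by
  intro h
  apply hv
  funext i
  exact (RingHom.injective (algebraMap k F)) (by simpa using congrFun h i)

lemma onLP_smul {a : k} {L : Fin 3 → k} {x : Projectivization F (Fin 3 → F)}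
    (h : onLP k F L x) : onLP k F (a • L) x := by
  unfold onLP at *
  have : ∀ i, algebraMap k F ((a • L) i) * x.rep i
      = algebraMap k F a * (algebraMap k F (L i) * x.rep i) := by
    intro i; simp [Pi.smul_apply, smul_eq_mul, _root_.map_mul, mul_assoc]
  rw [Finset.sum_congr rfl fun i _ => this i, ← Finset.mul_sum, h, mul_zero]

lemma onLP_mk {L : Fin 3 → k} (hL : L ≠ 0) {x : Projectivization F (Fin 3 → F)}
    (h : onLP k F L x) : onLP k F (Projectivization.mk k L hL).rep x := by
  obtain ⟨d, hd⟩ := exists_smul_eq_mk_rep k L hL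
  rw [← hd, Units.smul_def]
  exact onLP_smul h

lemma key_unique {x : Projectivization F (Fin 3 → F)} (hx : ¬ subP k F x)
    {L L' : Fin 3 → k} (hL : L ≠ 0)
    (h1 : onLP k F L x) (h2 : onLP k F L' x) : ∃ a : k, L' = a • L := by
  by_cases hcr : cr L L' = 0
  · exact cr_eq_zero hL hcr
  · exfalso
    obtain ⟨c, hc⟩ := keylem L L' x.rep h1 h2 hcr
    exact hx ⟨cr L L', hcr, c, hc⟩
end plane

section plane2
variable {k F : Type*} [Field k] [Field F] [Algebra k F]

lemma sub_card :
    Nat.card {x : Projectivization F (Fin 3 → F) // subP k F x}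
      = Nat.card (Projectivization k (Fin 3 → k)) := by
  have hsubmk : ∀ Λ : Projectivization k (Fin 3 → k),
      subP k F (Projectivization.mk F (fun i => algebraMap k F (Λ.rep i))
        (emb_ne_zero Λ.rep_nonzero)) := by
    intro Λ
    obtain ⟨d, hd⟩ := exists_smul_eq_mk_rep F
      (fun i => algebraMap k F (Λ.rep i)) (emb_ne_zero Λ.rep_nonzero)
    exact ⟨Λ.rep, Λ.rep_nonzero, d, by rw [← hd, Units.smul_def]⟩
  let φ : Projectivization k (Fin 3 → k) → {x : Projectivization F (Fin 3 → F) // subP k F x} :=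
    fun Λ => ⟨_, hsubmk Λ⟩
  have hinj : Function.Injective (algebraMap k F) := RingHom.injective _
  refine (Nat.card_congr (Equiv.ofBijective φ ⟨?_, ?_⟩)).symm
  · intro Λ Λ' h
    obtain ⟨d, hd⟩ := (mk_eq_mk_iff' F _ _ (emb_ne_zero Λ.rep_nonzero)
      (emb_ne_zero Λ'.rep_nonzero)).1 (congrArg Subtype.val h)
    obtain ⟨i, hi⟩ := Function.ne_iff.1 Λ'.rep_nonzero
    simp only [Pi.zero_apply] at hi
    have hdi : d * algebraMap k F (Λ'.rep i) = algebraMap k F (Λ.rep i) := by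
      have := congrFun hd i
      simpa [Pi.smul_apply, smul_eq_mul] using this
    have hda : d = algebraMap k F (Λ.rep i / Λ'.rep i) := by
      have hne : algebraMap k F (Λ'.rep i) ≠ 0 := fun hz => hi (hinj (by simpa using hz))
      rw [map_div₀, eq_div_iff hne]
      exact hdi
    have hrep : Λ.rep = (Λ.rep i / Λ'.rep i) • Λ'.rep := by
      funext j
      have := congrFun hd j
      rw [hda] at this
      simp only [Pi.smul_apply, smul_eq_mul] at this ⊢
      exact hinj (by rw [_root_.map_mul]; exact this.symm)
    rw [← Λ.mk_rep, ← Λ'.mk_rep]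
    exact (mk_eq_mk_iff' k _ _ Λ.rep_nonzero Λ'.rep_nonzero).2 ⟨_, hrep.symm⟩
  · rintro ⟨x, v, hv0, c, hc⟩
    refine ⟨Projectivization.mk k v hv0, Subtype.ext ?_⟩
    have hc0 : c ≠ 0 := by rintro rfl; exact x.rep_nonzero (by simpa using hc)
    obtain ⟨d, hd⟩ := exists_smul_eq_mk_rep k v hv0
    have h1 : (Projectivization.mk F
        (fun i => algebraMap k F ((Projectivization.mk k v hv0).rep i))
        (emb_ne_zero (Projectivization.mk k v hv0).rep_nonzero))
        = Projectivization.mk F (fun i => algebraMap k F (v i)) (emb_ne_zero hv0) := by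
      refine (mk_eq_mk_iff' F _ _ _ _).2 ⟨algebraMap k F d, funext fun j => ?_⟩
      have := congrFun hd j
      simp only [Units.smul_def, Pi.smul_apply, smul_eq_mul] at this
      simp only [Pi.smul_apply, smul_eq_mul]
      rw [← _root_.map_mul, this]
    have h2 : x = Projectivization.mk F (fun i => algebraMap k F (v i)) (emb_ne_zero hv0) := by
      conv_lhs => rw [← x.mk_rep]
      exact (mk_eq_mk_iff' F _ _ x.rep_nonzero _).2 ⟨c, hc.symm⟩
    show Projectivization.mk F (fun i => algebraMap k F ((Projectivization.mk k v hv0).rep i))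
      (emb_ne_zero (Projectivization.mk k v hv0).rep_nonzero) = x
    rw [h1, ← h2]

lemma card_lines_through [Fintype k] {x : Projectivization F (Fin 3 → F)} (hx : subP k F x) :
    Nat.card {Λ : Projectivization k (Fin 3 → k) // onLP k F Λ.rep x}
      = Fintype.card k + 1 := by
  obtain ⟨v, hv0, c, hc⟩ := hx
  have hc0 : c ≠ 0 := by rintro rfl; exact x.rep_nonzero (by simpa using hc)
  have hinj : Function.Injective (algebraMap k F) := RingHom.injective _
  have hiff : ∀ Λ : Projectivization k (Fin 3 → k),
      onLP k F Λ.rep x ↔ ∑ i, v i * Λ.rep i = 0 := by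
    intro Λ
    unfold onLP
    have hterm : ∀ i : Fin 3, algebraMap k F (Λ.rep i) * x.rep i
        = c * algebraMap k F (v i * Λ.rep i) := by
      intro i
      rw [hc]
      simp only [Pi.smul_apply, smul_eq_mul, _root_.map_mul]
      ring
    rw [Finset.sum_congr rfl fun i _ => hterm i, ← Finset.mul_sum, ← map_sum]
    constructor
    · intro h
      rcases mul_eq_zero.1 h with h | h
      · exact absurd h hc0
      · exact hinj (by simpa using h)
    · intro h; rw [h, map_zero, mul_zero]
  rw [Nat.card_congr (Equiv.subtypeEquivRight hiff)]
  have h := card_on_line k v hv0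
  have h1lt : 1 < Fintype.card k := Fintype.one_lt_card
  have key : (Fintype.card k + 1) * (Fintype.card k - 1) = Fintype.card k ^ 2 - 1 := by
    zify [h1lt.le, Nat.one_le_pow 2 (Fintype.card k) (by omega)]
    ring
  exact nat_resolve (by omega) h key

lemma exists_line_of_sub [Fintype k] {x : Projectivization F (Fin 3 → F)} (hx : subP k F x) :
    ∃ L : Fin 3 → k, L ≠ 0 ∧ onLP k F L x := by
  have h := card_lines_through (F := F) hx
  have hpos : 0 < Nat.card {Λ : Projectivization k (Fin 3 → k) // onLP k F Λ.rep x} := by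
    rw [h]; omega
  obtain ⟨Λ⟩ := (Nat.card_pos_iff.1 hpos).1
  exact ⟨Λ.1.rep, Λ.1.rep_nonzero, Λ.2⟩

lemma lines_through_unique {x : Projectivization F (Fin 3 → F)} (hx : ¬ subP k F x)
    {L : Fin 3 → k} (hL : L ≠ 0) (hon : onLP k F L x) :
    Nat.card {Λ : Projectivization k (Fin 3 → k) // onLP k F Λ.rep x} = 1 := by
  have huniq : ∀ Θ : {Λ : Projectivization k (Fin 3 → k) // onLP k F Λ.rep x},
      Θ.1 = Projectivization.mk k L hL := by
    intro Θ
    obtain ⟨a, ha⟩ := key_unique hx hL hon Θ.2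
    conv_lhs => rw [← Θ.1.mk_rep]
    exact (mk_eq_mk_iff' k _ _ Θ.1.rep_nonzero hL).2 ⟨a, ha.symm⟩
  rw [Nat.card_eq_one_iff_unique]
  exact ⟨⟨fun Λ Λ' => Subtype.ext ((huniq Λ).trans (huniq Λ').symm)⟩,
    ⟨⟨Projectivization.mk k L hL, onLP_mk hL hon⟩⟩⟩

end plane2

/-- In PG(2,q^3), the number of points lying on exactly one extended line
of the subplane PG(2,q) but not in PG(2,q) is q(q^3-1)(q+1), and the number of points
lying on no extended line of PG(2,q) is q^3(q^2-1)(q-1). -/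
theorem stmt8 (p n q : ℕ) (hp : p.Prime) (hn : 0 < n) (hq : q = p ^ n)
    (k F : Type) [Field k] [Field F] [Algebra k F] [Fintype k] [Fintype F]
    (hk : Fintype.card k = q) (hF : Fintype.card F = q ^ 3) :
    Set.ncard {x : Projectivization F (Fin 3 → F) |
        (¬ ∃ v : Fin 3 → k, v ≠ 0 ∧ ∃ c : F,
          x.rep = c • (fun i => algebraMap k F (v i))) ∧
        ∃ L : Fin 3 → k, L ≠ 0 ∧ (∑ i, algebraMap k F (L i) * x.rep i = 0) ∧
          ∀ L' : Fin 3 → k, L' ≠ 0 → (∑ i, algebraMap k F (L' i) * x.rep i = 0) →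
            ∃ a : k, L' = a • L}
      = q * (q ^ 3 - 1) * (q + 1) ∧
    Set.ncard {x : Projectivization F (Fin 3 → F) |
        ¬ ∃ L : Fin 3 → k, L ≠ 0 ∧ ∑ i, algebraMap k F (L i) * x.rep i = 0}
      = q ^ 3 * (q ^ 2 - 1) * (q - 1) := by
  classical
  have hq2 : 1 < q := by
    rw [hq]; exact Nat.one_lt_pow hn.ne' hp.one_lt
  have hq3 : 1 < q ^ 3 := Nat.one_lt_pow (by norm_num) hq2
  have hPk : Nat.card (Projectivization k (Fin 3 → k)) = q ^ 2 + q + 1 := by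
    have h := card_proj_plane k
    rw [hk] at h
    have key : (q ^ 2 + q + 1) * (q - 1) = q ^ 3 - 1 := by
      zify [hq2.le, hq3.le]; ring
    exact nat_resolve (by omega) h key
  have hP : Nat.card (Projectivization F (Fin 3 → F)) = q ^ 6 + q ^ 3 + 1 := by
    have h := card_proj_plane F
    rw [hF] at h
    have key : (q ^ 6 + q ^ 3 + 1) * (q ^ 3 - 1) = (q ^ 3) ^ 3 - 1 := by
      zify [hq3.le, (Nat.one_le_pow 3 (q ^ 3) (by omega) : 1 ≤ (q ^ 3) ^ 3)]; ring
    exact nat_resolve (by omega) h key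
  have hline : ∀ Λ : Projectivization k (Fin 3 → k),
      Nat.card {x : Projectivization F (Fin 3 → F) // onLP k F Λ.rep x} = q ^ 3 + 1 := by
    intro Λ
    have h := card_on_line F _ (emb_ne_zero (F := F) Λ.rep_nonzero)
    rw [hF] at h
    have key : (q ^ 3 + 1) * (q ^ 3 - 1) = (q ^ 3) ^ 2 - 1 := by
      zify [hq3.le, (Nat.one_le_pow 2 (q ^ 3) (by omega) : 1 ≤ (q ^ 3) ^ 2)]; ring
    exact nat_resolve (by omega) h key
  set J := {r : Projectivization k (Fin 3 → k) × Projectivization F (Fin 3 → F) //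
      onLP k F r.1.rep r.2} with hJdef
  have hJ1 : Nat.card J = (q ^ 2 + q + 1) * (q ^ 3 + 1) := by
    have e1 : J ≃ Σ Λ : Projectivization k (Fin 3 → k),
        {x : Projectivization F (Fin 3 → F) // onLP k F Λ.rep x} :=
      Equiv.subtypeProdEquivSigmaSubtype
        (fun (Λ : Projectivization k (Fin 3 → k)) (x : Projectivization F (Fin 3 → F)) =>
          onLP k F Λ.rep x)
    rw [Nat.card_congr e1, card_sigma_const _ (q ^ 3 + 1) hline, hPk]
  have hJsplit : Nat.card J
      = Nat.card {r : J // subP k F r.1.2} + Nat.card {r : J // ¬ subP k F r.1.2} := by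
    rw [← Nat.card_sum]
    exact Nat.card_congr (Equiv.sumCompl _).symm
  have hJs : Nat.card {r : J // subP k F r.1.2} = (q ^ 2 + q + 1) * (q + 1) := by
    have e2 : {r : J // subP k F r.1.2}
        ≃ Σ x : {x : Projectivization F (Fin 3 → F) // subP k F x},
            {Λ : Projectivization k (Fin 3 → k) // onLP k F Λ.rep x.1} :=
      ⟨fun r => ⟨⟨r.1.1.2, r.2⟩, ⟨r.1.1.1, r.1.2⟩⟩,
       fun s => ⟨⟨⟨s.2.1, s.1.1⟩, s.2.2⟩, s.1.2⟩,
       fun r => rfl, fun s => rfl⟩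
    rw [Nat.card_congr e2, card_sigma_const _ (q + 1)
      (fun x => by rw [card_lines_through x.2, hk]), sub_card, hPk]
  have hJn : Nat.card {r : J // ¬ subP k F r.1.2}
      = Nat.card {x : Projectivization F (Fin 3 → F) //
          ¬ subP k F x ∧ ∃ L : Fin 3 → k, L ≠ 0 ∧ onLP k F L x} := by
    refine Nat.card_congr (Equiv.ofBijective
      (fun r => ⟨r.1.1.2, r.2, r.1.1.1.rep, r.1.1.1.rep_nonzero, r.1.2⟩) ⟨?_, ?_⟩)
    · intro r r' hrr
      have hx : r.1.1.2 = r'.1.1.2 := congrArg Subtype.val hrr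
      apply Subtype.ext; apply Subtype.ext
      refine Prod.ext ?_ hx
      have h2' : onLP k F r'.1.1.1.rep r.1.1.2 := by rw [hx]; exact r'.1.2
      obtain ⟨a, ha⟩ := key_unique r.2 r.1.1.1.rep_nonzero r.1.2 h2'
      have hmk : r'.1.1.1 = r.1.1.1 := by
        rw [← mk_rep r'.1.1.1, ← mk_rep r.1.1.1]
        exact (mk_eq_mk_iff' k _ _ r'.1.1.1.rep_nonzero r.1.1.1.rep_nonzero).2 ⟨a, ha.symm⟩
      exact hmk.symm
    · rintro ⟨x, hns, L, hL0, hon⟩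
      exact ⟨⟨⟨⟨Projectivization.mk k L hL0, x⟩, onLP_mk hL0 hon⟩, hns⟩, rfl⟩
  have hS1 : Nat.card {x : Projectivization F (Fin 3 → F) //
      ¬ subP k F x ∧ ∃ L : Fin 3 → k, L ≠ 0 ∧ onLP k F L x} = q * (q ^ 3 - 1) * (q + 1) := by
    have key : (q ^ 2 + q + 1) * (q ^ 3 + 1)
        = (q ^ 2 + q + 1) * (q + 1) + q * (q ^ 3 - 1) * (q + 1) := by
      zify [hq3.le, hq2.le]; ring
    rw [hJ1, hJs, hJn, key] at hJsplit
    exact (Nat.add_left_cancel hJsplit).symm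
  have hTsplit : Nat.card (Projectivization F (Fin 3 → F))
      = Nat.card {x : Projectivization F (Fin 3 → F) // ∃ L : Fin 3 → k, L ≠ 0 ∧ onLP k F L x}
        + Nat.card {x : Projectivization F (Fin 3 → F) //
            ¬ ∃ L : Fin 3 → k, L ≠ 0 ∧ onLP k F L x} := by
    rw [← Nat.card_sum]
    exact Nat.card_congr (Equiv.sumCompl _).symm
  have hT : Nat.card {x : Projectivization F (Fin 3 → F) // ∃ L : Fin 3 → k, L ≠ 0 ∧ onLP k F L x}
      = Nat.card {x : Projectivization F (Fin 3 → F) // subP k F x}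
        + Nat.card {x : Projectivization F (Fin 3 → F) //
            ¬ subP k F x ∧ ∃ L : Fin 3 → k, L ≠ 0 ∧ onLP k F L x} := by
    rw [← Nat.card_sum]
    have e5 : {t : {x : Projectivization F (Fin 3 → F) // ∃ L : Fin 3 → k, L ≠ 0 ∧ onLP k F L x} //
        subP k F t.1} ⊕ {t : {x : Projectivization F (Fin 3 → F) //
          ∃ L : Fin 3 → k, L ≠ 0 ∧ onLP k F L x} // ¬ subP k F t.1}
        ≃ {x : Projectivization F (Fin 3 → F) // ∃ L : Fin 3 → k, L ≠ 0 ∧ onLP k F L x} :=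
      Equiv.sumCompl _
    have e6 : {t : {x : Projectivization F (Fin 3 → F) //
          ∃ L : Fin 3 → k, L ≠ 0 ∧ onLP k F L x} // subP k F t.1}
        ≃ {x : Projectivization F (Fin 3 → F) // subP k F x} :=
      ⟨fun t => ⟨t.1.1, t.2⟩, fun s => ⟨⟨s.1, exists_line_of_sub s.2⟩, s.2⟩,
       fun t => rfl, fun s => rfl⟩
    have e7 : {t : {x : Projectivization F (Fin 3 → F) //
          ∃ L : Fin 3 → k, L ≠ 0 ∧ onLP k F L x} // ¬ subP k F t.1}
        ≃ {x : Projectivization F (Fin 3 → F) //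
            ¬ subP k F x ∧ ∃ L : Fin 3 → k, L ≠ 0 ∧ onLP k F L x} :=
      ⟨fun t => ⟨t.1.1, t.2, t.1.2⟩, fun s => ⟨⟨s.1, s.2.2⟩, s.2.1⟩,
       fun t => rfl, fun s => rfl⟩
    rw [Nat.card_congr e5.symm, Nat.card_sum, Nat.card_congr e6, Nat.card_congr e7,
      Nat.card_sum]
  have hS0 : Nat.card {x : Projectivization F (Fin 3 → F) //
      ¬ ∃ L : Fin 3 → k, L ≠ 0 ∧ onLP k F L x} = q ^ 3 * (q ^ 2 - 1) * (q - 1) := by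
    rw [hP, hT, sub_card, hPk, hS1] at hTsplit
    have key : q ^ 6 + q ^ 3 + 1
        = ((q ^ 2 + q + 1) + q * (q ^ 3 - 1) * (q + 1)) + q ^ 3 * (q ^ 2 - 1) * (q - 1) := by
      zify [hq2.le, hq3.le, (Nat.one_lt_pow (n := 2) (by norm_num) hq2).le]; ring
    exact Nat.add_left_cancel (hTsplit.symm.trans key)
  constructor
  · rw [← Nat.card_coe_set_eq, ← hS1]
    refine Nat.card_congr (Equiv.subtypeEquivRight fun x => ?_)
    constructor
    · rintro ⟨hns, L, hL0, hon, _⟩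
      exact ⟨hns, L, hL0, hon⟩
    · rintro ⟨hns, L, hL0, hon⟩
      exact ⟨hns, L, hL0, hon, fun L' hL'0 hon' => key_unique hns hL0 hon hon'⟩
  · rw [← Nat.card_coe_set_eq, ← hS0]
    exact Nat.card_congr (Equiv.subtypeEquivRight fun x => Iff.rfl)
end

section
/- The elements 1, τ+τ^q, τ·τ^q of GF(q^3) are linearly independent over GF(q), where τ is a generator of GF(q^3) over GF(q). -/
open Polynomial in
lemma aux_mem_range {k F : Type} [Field k] [Field F] [Algebra k F] [Fintype k] [Fintype F]
    {q : ℕ} (hq1 : 1 < q) (hk : Fintype.card k = q) (x : F) (hx : x ^ q = x) :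
    x ∈ Set.range (algebraMap k F) := by
  classical
  set g : F[X] := X ^ q - X with hg
  have hdeg : g.natDegree = q := by
    rw [hg]
    compute_degree!
    · rw [if_neg (by omega)]; norm_num
    · omega
  have hg0 : g ≠ 0 := fun h => by simp [h] at hdeg; omega
  have hroot : ∀ y : F, y ^ q = y → y ∈ g.roots := by
    intro y hy
    rw [mem_roots hg0]
    simp [hg, IsRoot, hy]
  set T : Finset F := Finset.univ.image (algebraMap k F) with hT
  have hTcard : T.card = q := by
    rw [hT, Finset.card_image_of_injective _ (algebraMap k F).injective,
      Finset.card_univ, hk]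
  have hTsub : T ⊆ g.roots.toFinset := by
    intro y hy
    rw [hT, Finset.mem_image] at hy
    obtain ⟨a, _, rfl⟩ := hy
    rw [Multiset.mem_toFinset]
    refine hroot _ ?_
    rw [← map_pow, ← hk, FiniteField.pow_card]
  have hle : g.roots.toFinset.card ≤ q := by
    calc g.roots.toFinset.card ≤ Multiset.card g.roots := g.roots.toFinset_card_le
    _ ≤ g.natDegree := g.card_roots'
    _ = q := hdeg
  have hTeq : T = g.roots.toFinset :=
    Finset.eq_of_subset_of_card_le hTsub (by omega)
  have hxT : x ∈ T := by
    rw [hTeq, Multiset.mem_toFinset]; exact hroot x hx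
  rw [hT, Finset.mem_image] at hxT
  obtain ⟨a, _, rfl⟩ := hxT
  exact ⟨a, rfl⟩

/-- The elements 1, τ+τ^q, τ·τ^q of GF(q^3) are linearly independent
over GF(q), where τ generates GF(q^3) over GF(q). -/
theorem stmt10 (p n q : ℕ) (hp : p.Prime) (hn : 0 < n) (hq : q = p ^ n)
    (k F : Type) [Field k] [Field F] [Algebra k F] [Fintype k] [Fintype F]
    (hk : Fintype.card k = q) (hF : Fintype.card F = q ^ 3)
    (τ : F) (hgen : Algebra.adjoin k {τ} = ⊤) :
    LinearIndependent k ![(1 : F), τ + τ ^ q, τ * τ ^ q] := by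
  classical
  haveI : Fact p.Prime := ⟨hp⟩
  have hq2 : 1 < q := by rw [hq]; exact Nat.one_lt_pow hn.ne' hp.one_lt
  -- characteristic of F is p
  have hcharF : CharP F p := by
    obtain ⟨r, hr⟩ := CharP.exists F
    haveI := hr
    have hrprime : r.Prime := CharP.char_is_prime F r
    obtain ⟨m, _, hcard⟩ := FiniteField.card F r
    have : r ∣ p := by
      have : r ∣ p ^ (n * 3) := by
        rw [pow_mul, ← hq, ← hF, hcard]
        exact dvd_pow_self r m.pos.ne'
      exact hrprime.dvd_of_dvd_pow this
    rwa [(Nat.prime_dvd_prime_iff_eq hrprime hp).mp this] at hr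
  haveI := hcharF
  set σ : F →+* F := iterateFrobenius F p n with hσ
  have hσ_def : ∀ x : F, σ x = x ^ q := by
    intro x; rw [hσ, iterateFrobenius_def, hq]
  have hfix : ∀ a : k, σ (algebraMap k F a) = algebraMap k F a := by
    intro a
    rw [hσ_def, ← map_pow, ← hk, FiniteField.pow_card]
  have hτnotin : τ ∉ Set.range (algebraMap k F) := by
    rintro ⟨a, ha⟩
    have hbot : Algebra.adjoin k {τ} ≤ ⊥ := by
      rw [Algebra.adjoin_le_iff]
      intro y hy
      rw [Set.mem_singleton_iff] at hy
      rw [SetLike.mem_coe, Algebra.mem_bot]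
      exact ⟨a, hy ▸ ha⟩
    rw [hgen] at hbot
    have hsurj : Function.Surjective (algebraMap k F) := by
      intro x
      have : x ∈ (⊥ : Subalgebra k F) := hbot (by trivial)
      rwa [Algebra.mem_bot] at this
    have := Fintype.card_le_of_surjective _ hsurj
    rw [hk, hF] at this
    rw [pow_succ, pow_succ, pow_one] at this
    nlinarith
  have hστ_ne : τ ^ q ≠ τ := fun h => hτnotin (aux_mem_range hq2 hk τ h)
  -- τ^(q^3) = τ
  have hτq3 : ((τ ^ q) ^ q) ^ q = τ := by
    rw [← pow_mul, ← pow_mul]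
    have h3 : q * (q * q) = Fintype.card F := by rw [hF]; ring
    rw [h3, FiniteField.pow_card]
  rw [Fintype.linearIndependent_iff]
  intro g hsum
  simp only [Fin.sum_univ_three, Matrix.cons_val_zero, Matrix.cons_val_one, Matrix.head_cons,
    Matrix.cons_val_two, Matrix.tail_cons, smul_eq_mul, Algebra.smul_def, mul_one] at hsum
  set A := algebraMap k F (g 0)
  set B := algebraMap k F (g 1)
  set C := algebraMap k F (g 2)
  set u := τ ^ q with hu
  set v := u ^ q with hv
  have hσu : σ τ = u := by rw [hσ_def]
  have hσv : σ u = v := by rw [hσ_def]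
  have hστv : σ v = τ := by rw [hσ_def]; exact hτq3
  have hEq2 : A + B * (v + τ) + C * (v * τ) = 0 := by
    have := congrArg σ (congrArg σ hsum)
    simpa [map_add, map_mul, map_zero, hfix, hσu, hσv, hστv, A, B, C] using this
  have hfactor : (u - v) * (B + C * τ) = 0 := by linear_combination hsum - hEq2
  have huv : u ≠ v := by
    intro h
    exact hστ_ne (σ.injective (by rw [hσu, hσv, ← h]))
  have hBC : B + C * τ = 0 := by
    rcases mul_eq_zero.mp hfactor with h | h
    · exact absurd (sub_eq_zero.mp h) huv
    · exact h
  have hg2 : g 2 = 0 := by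
    by_contra hc
    have hC : C ≠ 0 := fun h => hc ((map_eq_zero _).mp h)
    apply hτnotin
    refine ⟨-(g 1) / (g 2), ?_⟩
    rw [map_div₀, map_neg]
    field_simp [A, B, C] at hBC ⊢
    linear_combination -hBC
  have hC0 : C = 0 := by simp [C, hg2]
  have hg1 : g 1 = 0 := by
    have : B = 0 := by rw [hC0] at hBC; simpa using hBC
    exact (map_eq_zero _).mp this
  have hg0 : g 0 = 0 := by
    have hB0 : B = 0 := (map_eq_zero _).mpr hg1
    have : A = 0 := by rw [hB0, hC0] at hsum; simpa using hsum
    exact (map_eq_zero _).mp this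
  intro i
  fin_cases i <;> assumption
end

section
/- For every line [l,m,n] of the subplane PG(2,q) (l,m,n ∈ GF(q), not all zero), the intersection of its extension with the line ℓ = [-ττ^q, τ+τ^q, -1] is the point E + θ E^q where E = (1,τ,τ^2) and θ = -(l+mτ+nτ^2)/(l+mτ+nτ^2)^q; in particular θ^{q^2+q+1} = -1, and distinct lines of PG(2,q) give distinct values of θ, so the splash of PG(2,q) onto ℓ is {E + θE^q : θ^{q^2+q+1} = -1}. -/
open Matrix

/-- s(l,m,n) = l + mτ + nτ², the coordinate of the line [l,m,n] of PG(2,q). -/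
def lineVal (k F : Type) [Field k] [Field F] [Algebra k F] (τ : F) (l m n : k) : F :=
  algebraMap k F l + algebraMap k F m * τ + algebraMap k F n * τ ^ 2

/-- θ(l,m,n) = -s/s^q, the splash parameter of the line [l,m,n]. -/
noncomputable def splashParam (k F : Type) [Field k] [Field F] [Algebra k F]
    (q : ℕ) (τ : F) (l m n : k) : F :=
  -(lineVal k F τ l m n) / (lineVal k F τ l m n) ^ q

/-- The point E + θE^q of the line ℓ, where E = (1,τ,τ²). -/
noncomputable def splashPoint (F : Type) [Field F] (q : ℕ) (τ θ : F) : Fin 3 → F :=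
  ![1, τ, τ ^ 2] + θ • ![1, τ ^ q, τ ^ (2 * q)]

/-!
Write `s = l + mτ + nτ²`. The Frobenius `x ↦ x ^ q` fixes `GF(q)` and maps `E` to `E^q`, so the
line `[l,m,n]` evaluated at `E + θE^q` is `s + θ s^q`, which vanishes for `θ = -s/s^q`; the whole
pencil `E + θE^q` lies on `ℓ`, the line through `E` and `E^q`. Since `s^(q²+q+1)` is the norm of
`s`, it is fixed by the Frobenius, whence `θ^(q²+q+1) = -1`. As `1, τ, τ²` is a basis of
`GF(q³)/GF(q)`, the lines of `PG(2,q)` are the nonzero `s` up to `GF(q)ˣ`. Two values of `s` with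
the same `θ` differ by a factor fixed by the Frobenius, i.e. lying in `GF(q)`, and by Hilbert's
Theorem 90 every `-θ` of norm `1` is of the form `s/s^q`.
-/

namespace FiniteField

variable {K L : Type*} [Field K] [Fintype K] [Field L] [Finite L] [Algebra K L]

theorem exists_frobeniusAlgEquivOfAlgebraic_pow_eq (f : Gal(L/K)) :
    ∃ n : ℕ, frobeniusAlgEquivOfAlgebraic K L ^ n = f :=
  let ⟨n, hn⟩ := (bijective_frobeniusAlgEquivOfAlgebraic_pow K L).2 f
  ⟨n, hn⟩

theorem mem_range_algebraMap_of_pow_card_eq {x : L} (hx : x ^ Fintype.card K = x) :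
    x ∈ Set.range (algebraMap K L) := by
  refine (IsGalois.mem_range_algebraMap_iff_fixed x).2 fun f => ?_
  obtain ⟨n, rfl⟩ := exists_frobeniusAlgEquivOfAlgebraic_pow_eq f
  rw [AlgEquiv.coe_pow]
  exact Function.iterate_fixed hx n

/-- Hilbert's Theorem 90 for the cyclic extension `L/K`, whose Galois group is generated by
the Frobenius `x ↦ x ^ #K`. -/
theorem exists_div_pow_card_eq_of_pow_eq_one {K L : Type} [Field K] [Fintype K] [Field L]
    [Finite L] [Algebra K L] {x : L}
    (hx : x ^ ((Nat.card L - 1) / (Nat.card K - 1)) = 1) :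
    ∃ y : Lˣ, (y : L) / (y : L) ^ Fintype.card K = x := by
  have hnorm : Algebra.norm K x = 1 :=
    (algebraMap K L).injective (by rw [algebraMap_norm_eq_pow, hx, map_one])
  have hgen (f : Gal(L/K)) : f ∈ Subgroup.zpowers (frobeniusAlgEquivOfAlgebraic K L) := by
    obtain ⟨n, rfl⟩ := exists_frobeniusAlgEquivOfAlgebraic_pow_eq f
    exact Subgroup.npow_mem_zpowers _ n
  exact groupCohomology.exists_div_of_norm_eq_one hgen hnorm

end FiniteField

section lineVal

variable {k F : Type} [Field k] [Field F] [Algebra k F] {τ : F}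

theorem lineVal_eq_sum (l m n : k) :
    lineVal k F τ l m n = ∑ i : Fin 3, ![l, m, n] i • τ ^ (i : ℕ) := by
  simp [lineVal, Fin.sum_univ_three, Algebra.smul_def]

theorem linearIndependent_pow_of_natDegree_minpoly (hdeg : (minpoly k τ).natDegree = 3) :
    LinearIndependent k fun i : Fin 3 => τ ^ (i : ℕ) := by
  have h := linearIndependent_pow (K := k) τ
  rwa [hdeg] at h

theorem lineVal_injective (hdeg : (minpoly k τ).natDegree = 3) {l m n l' m' n' : k}
    (h : lineVal k F τ l m n = lineVal k F τ l' m' n') : l = l' ∧ m = m' ∧ n = n' := by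
  rw [lineVal_eq_sum, lineVal_eq_sum] at h
  have := Fintype.linearIndependent_iffₛ.1 (linearIndependent_pow_of_natDegree_minpoly hdeg) _ _ h
  exact ⟨this 0, this 1, this 2⟩

theorem lineVal_ne_zero (hdeg : (minpoly k τ).natDegree = 3) {l m n : k}
    (h : ¬(l = 0 ∧ m = 0 ∧ n = 0)) : lineVal k F τ l m n ≠ 0 := fun h0 =>
  h (lineVal_injective hdeg (h0.trans (by simp [lineVal])))

theorem lineVal_mul (a l m n : k) :
    lineVal k F τ (a * l) (a * m) (a * n) = algebraMap k F a * lineVal k F τ l m n := by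
  simp only [lineVal, map_mul]
  ring

theorem lineVal_surjective [Fintype k] [Fintype F] (hF : Fintype.card F = Fintype.card k ^ 3)
    (hdeg : (minpoly k τ).natDegree = 3) (s : F) : ∃ l m n : k, lineVal k F τ l m n = s := by
  have hrank : Module.finrank k F = 3 :=
    Nat.pow_right_injective Fintype.one_lt_card (Module.card_eq_pow_finrank.symm.trans hF)
  let b := basisOfLinearIndependentOfCardEqFinrank
    (linearIndependent_pow_of_natDegree_minpoly hdeg) (by simp [hrank])
  refine ⟨b.repr s 0, b.repr s 1, b.repr s 2, ?_⟩
  conv_rhs => rw [← b.sum_repr s]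
  simp [lineVal_eq_sum, b, Fin.sum_univ_three]

theorem lineVal_pow_card [Fintype k] (l m n : k) :
    lineVal k F τ l m n ^ Fintype.card k =
      algebraMap k F l + algebraMap k F m * τ ^ Fintype.card k +
        algebraMap k F n * τ ^ (2 * Fintype.card k) := by
  change FiniteField.frobeniusAlgHom k F _ = _
  simp only [lineVal, map_add, map_mul, map_pow, AlgHom.commutes,
    FiniteField.frobeniusAlgHom_apply, ← pow_mul']

end lineVal

theorem odd_sq_add_add_one (q : ℕ) : Odd (q ^ 2 + q + 1) := by
  have h := (Nat.even_mul_succ_self q).add_one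
  rwa [show q * (q + 1) = q ^ 2 + q by ring] at h

theorem neg_div_pow_pow_eq_neg_one {F : Type*} [Field F] [Fintype F] {q : ℕ}
    (hF : Fintype.card F = q ^ 3) {s : F} (hs : s ≠ 0) :
    (-s / s ^ q) ^ (q ^ 2 + q + 1) = -1 := by
  -- `s ^ (q² + q + 1)` is the norm of `s` to the subfield of order `q`
  have hnorm : (s ^ (q ^ 2 + q + 1)) ^ q = s ^ (q ^ 2 + q + 1) := by
    calc (s ^ (q ^ 2 + q + 1)) ^ q = s ^ q ^ 3 * s ^ (q ^ 2 + q) := by ring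
      _ = s ^ (q ^ 2 + q + 1) := by rw [← hF, FiniteField.pow_card]; ring
  rw [div_pow, (odd_sq_add_add_one q).neg_pow, ← pow_mul, mul_comm, pow_mul, hnorm, neg_div,
    div_self (pow_ne_zero _ hs)]

section splash

variable {k F : Type} [Field k] [Field F] [Algebra k F] [Fintype k] {τ : F}

@[simp] theorem splashPoint_zero (q : ℕ) (θ : F) : splashPoint F q τ θ 0 = 1 + θ := by
  simp [splashPoint]

@[simp] theorem splashPoint_one (q : ℕ) (θ : F) : splashPoint F q τ θ 1 = τ + θ * τ ^ q := by
  simp [splashPoint]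

@[simp] theorem splashPoint_two (q : ℕ) (θ : F) :
    splashPoint F q τ θ 2 = τ ^ 2 + θ * τ ^ (2 * q) := by
  simp [splashPoint]

theorem splashPoint_mem_ell (q : ℕ) (θ : F) :
    -(τ * τ ^ q) * splashPoint F q τ θ 0 + (τ + τ ^ q) * splashPoint F q τ θ 1 -
      splashPoint F q τ θ 2 = 0 := by
  simp only [splashPoint_zero, splashPoint_one, splashPoint_two]
  ring

theorem splashPoint_splashParam_mem_line (hdeg : (minpoly k τ).natDegree = 3) {l m n : k}
    (h : ¬(l = 0 ∧ m = 0 ∧ n = 0)) :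
    let P := splashPoint F (Fintype.card k) τ (splashParam k F (Fintype.card k) τ l m n)
    algebraMap k F l * P 0 + algebraMap k F m * P 1 + algebraMap k F n * P 2 = 0 := by
  intro P
  set s := lineVal k F τ l m n
  have hP : algebraMap k F l * P 0 + algebraMap k F m * P 1 + algebraMap k F n * P 2 =
      s + splashParam k F (Fintype.card k) τ l m n * s ^ Fintype.card k := by
    rw [lineVal_pow_card]
    simp only [P, s, splashPoint_zero, splashPoint_one, splashPoint_two, lineVal]
    ring
  rw [hP, splashParam, div_mul_cancel₀ _ (pow_ne_zero _ (lineVal_ne_zero hdeg h)),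
    add_neg_cancel]

theorem exists_eq_mul_of_splashParam_eq [Finite F] (hdeg : (minpoly k τ).natDegree = 3)
    {l m n l' m' n' : k} (h : ¬(l = 0 ∧ m = 0 ∧ n = 0)) (h' : ¬(l' = 0 ∧ m' = 0 ∧ n' = 0))
    (heq : splashParam k F (Fintype.card k) τ l m n = splashParam k F (Fintype.card k) τ l' m' n') :
    ∃ a : k, a ≠ 0 ∧ l' = a * l ∧ m' = a * m ∧ n' = a * n := by
  simp only [splashParam, neg_div, neg_inj] at heq
  set s := lineVal k F τ l m n
  set s' := lineVal k F τ l' m' n'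
  have hs : s ≠ 0 := lineVal_ne_zero hdeg h
  have hs' : s' ≠ 0 := lineVal_ne_zero hdeg h'
  have hfix : (s' / s) ^ Fintype.card k = s' / s := by
    rw [div_eq_div_iff (pow_ne_zero _ hs) (pow_ne_zero _ hs')] at heq
    rw [div_pow, div_eq_div_iff (pow_ne_zero _ hs) hs]
    linear_combination heq
  obtain ⟨a, ha⟩ := FiniteField.mem_range_algebraMap_of_pow_card_eq hfix
  have ha0 : a ≠ 0 := by
    rintro rfl
    exact div_ne_zero hs' hs (by rw [← ha, map_zero])
  have hs'a : s' = lineVal k F τ (a * l) (a * m) (a * n) := by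
    rw [lineVal_mul, ha, div_mul_cancel₀ _ hs]
  obtain ⟨rfl, rfl, rfl⟩ := lineVal_injective hdeg hs'a
  exact ⟨a, ha0, rfl, rfl, rfl⟩

theorem exists_splashParam_eq [Fintype F] (hF : Fintype.card F = Fintype.card k ^ 3)
    (hdeg : (minpoly k τ).natDegree = 3) {θ : F}
    (hθ : θ ^ (Fintype.card k ^ 2 + Fintype.card k + 1) = -1) :
    ∃ l m n : k, ¬(l = 0 ∧ m = 0 ∧ n = 0) ∧ θ = splashParam k F (Fintype.card k) τ l m n := by
  set q := Fintype.card k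
  have hexp : (Nat.card F - 1) / (Nat.card k - 1) = q ^ 2 + q + 1 := by
    rw [Nat.card_eq_fintype_card, Nat.card_eq_fintype_card, hF,
      ← Nat.geomSum_eq Fintype.one_lt_card]
    simp only [Finset.sum_range_succ, Finset.sum_range_zero]
    ring
  obtain ⟨y, hy⟩ := FiniteField.exists_div_pow_card_eq_of_pow_eq_one (K := k) (x := -θ)
    (by rw [hexp, (odd_sq_add_add_one q).neg_pow, hθ, neg_neg])
  obtain ⟨l, m, n, hs⟩ := lineVal_surjective hF hdeg (y : F)
  refine ⟨l, m, n, ?_, ?_⟩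
  · rintro ⟨rfl, rfl, rfl⟩
    exact y.ne_zero (by simpa [lineVal] using hs.symm)
  · rw [splashParam, hs, neg_div, hy, neg_neg]

end splash

theorem stmt11_general (n q : ℕ)
    (k F : Type) [Field k] [Field F] [Algebra k F] [Fintype k] [Fintype F]
    (hk : Fintype.card k = q) (hF : Fintype.card F = q ^ 3)
    (τ : F) (hdeg : (minpoly k τ).natDegree = 3) :
    (∀ l m n : k, ¬(l = 0 ∧ m = 0 ∧ n = 0) →
      -- the point E + θE^q lies on the extension of the line [l,m,n] of PG(2,q):
      (algebraMap k F l * splashPoint F q τ (splashParam k F q τ l m n) 0 +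
       algebraMap k F m * splashPoint F q τ (splashParam k F q τ l m n) 1 +
       algebraMap k F n * splashPoint F q τ (splashParam k F q τ l m n) 2 = 0) ∧
      -- it lies on ℓ = [-ττ^q, τ+τ^q, -1]:
      (-(τ * τ ^ q) * splashPoint F q τ (splashParam k F q τ l m n) 0 +
       (τ + τ ^ q) * splashPoint F q τ (splashParam k F q τ l m n) 1 -
       splashPoint F q τ (splashParam k F q τ l m n) 2 = 0) ∧
      -- its parameter satisfies θ^{q²+q+1} = -1:
      (splashParam k F q τ l m n) ^ (q ^ 2 + q + 1) = -1) ∧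
    -- distinct lines of PG(2,q) give distinct parameters θ:
    (∀ l m n l' m' n' : k, ¬(l = 0 ∧ m = 0 ∧ n = 0) → ¬(l' = 0 ∧ m' = 0 ∧ n' = 0) →
      splashParam k F q τ l m n = splashParam k F q τ l' m' n' →
      ∃ a : k, a ≠ 0 ∧ l' = a * l ∧ m' = a * m ∧ n' = a * n) ∧
    -- every θ with θ^{q²+q+1} = -1 is the parameter of some line of PG(2,q):
    (∀ θ : F, θ ^ (q ^ 2 + q + 1) = -1 →
      ∃ l m n : k, ¬(l = 0 ∧ m = 0 ∧ n = 0) ∧ θ = splashParam k F q τ l m n) := by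
  subst hk
  refine ⟨fun l m n h => ⟨splashPoint_splashParam_mem_line hdeg h, splashPoint_mem_ell _ _,
      neg_div_pow_pow_eq_neg_one hF (lineVal_ne_zero hdeg h)⟩,
    fun _ _ _ _ _ _ h h' heq => exists_eq_mul_of_splashParam_eq hdeg h h' heq,
    fun _ hθ => exists_splashParam_eq hF hdeg hθ⟩

/-- each line [l,m,n] of PG(2,q) meets ℓ = [-ττ^q, τ+τ^q, -1] in the
point E + θE^q with θ = -(l+mτ+nτ²)/(l+mτ+nτ²)^q; moreover θ^{q²+q+1} = -1, distinct
lines give distinct θ, and every θ with θ^{q²+q+1} = -1 arises, so the splash of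
PG(2,q) onto ℓ is {E + θE^q : θ^{q²+q+1} = -1}. -/
theorem stmt11 (p n q : ℕ) (hp : p.Prime) (hn : 0 < n) (hq : q = p ^ n)
    (k F : Type) [Field k] [Field F] [Algebra k F] [Fintype k] [Fintype F]
    (hk : Fintype.card k = q) (hF : Fintype.card F = q ^ 3)
    (τ : F) (hdeg : (minpoly k τ).natDegree = 3) :
    (∀ l m n : k, ¬(l = 0 ∧ m = 0 ∧ n = 0) →
      -- the point E + θE^q lies on the extension of the line [l,m,n] of PG(2,q):
      (algebraMap k F l * splashPoint F q τ (splashParam k F q τ l m n) 0 +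
       algebraMap k F m * splashPoint F q τ (splashParam k F q τ l m n) 1 +
       algebraMap k F n * splashPoint F q τ (splashParam k F q τ l m n) 2 = 0) ∧
      -- it lies on ℓ = [-ττ^q, τ+τ^q, -1]:
      (-(τ * τ ^ q) * splashPoint F q τ (splashParam k F q τ l m n) 0 +
       (τ + τ ^ q) * splashPoint F q τ (splashParam k F q τ l m n) 1 -
       splashPoint F q τ (splashParam k F q τ l m n) 2 = 0) ∧
      -- its parameter satisfies θ^{q²+q+1} = -1:
      (splashParam k F q τ l m n) ^ (q ^ 2 + q + 1) = -1) ∧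
    -- distinct lines of PG(2,q) give distinct parameters θ:
    (∀ l m n l' m' n' : k, ¬(l = 0 ∧ m = 0 ∧ n = 0) → ¬(l' = 0 ∧ m' = 0 ∧ n' = 0) →
      splashParam k F q τ l m n = splashParam k F q τ l' m' n' →
      ∃ a : k, a ≠ 0 ∧ l' = a * l ∧ m' = a * m ∧ n' = a * n) ∧
    -- every θ with θ^{q²+q+1} = -1 is the parameter of some line of PG(2,q):
    (∀ θ : F, θ ^ (q ^ 2 + q + 1) = -1 →
      ∃ l m n : k, ¬(l = 0 ∧ m = 0 ∧ n = 0) ∧ θ = splashParam k F q τ l m n) :=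
  stmt11_general n q k F hk hF τ hdeg
end

section
/- Let I be a cyclic group of order q^2+q+1 acting on a projective plane of order q (so with q^2+q+1 points and q^2+q+1 lines, each line having q+1 points), such that I acts transitively on the points. Then I acts regularly on the lines. -/
/-- Auxiliary: a finite group acting freely on a finite type has cardinality dividing
the cardinality of the type. -/
lemma free_action_card_dvd {G S : Type*} [Group G] [Finite G] [Finite S] [MulAction G S]
    (h : ∀ (g : G) (x : S), g • x = x → g = 1) : Nat.card G ∣ Nat.card S := by
  classical
  have horb : ∀ x : S, Nat.card (MulAction.orbit G x) = Nat.card G := by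
    intro x
    have hstab : MulAction.stabilizer G x = ⊥ := by
      ext g
      simp only [MulAction.mem_stabilizer_iff, Subgroup.mem_bot]
      exact ⟨fun hx => h g x hx, by rintro rfl; exact one_smul _ _⟩
    rw [Nat.card_congr (MulAction.orbitEquivQuotientStabilizer G x),
      show Nat.card (G ⧸ MulAction.stabilizer G x) = (MulAction.stabilizer G x).index from rfl,
      hstab, Subgroup.index_bot]
  haveI : Fintype (MulAction.orbitRel.Quotient G S) := Fintype.ofFinite _
  haveI : Fintype S := Fintype.ofFinite _
  have e := MulAction.selfEquivSigmaOrbits G S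
  rw [Nat.card_eq_fintype_card (α := S), Fintype.card_congr e, Fintype.card_sigma]
  refine Finset.dvd_sum fun ω _ => ?_
  rw [← Nat.card_eq_fintype_card, horb]

/-- A cyclic group of order q^2+q+1 acting on a projective plane of
order q, transitively on points, acts regularly on lines. -/
theorem stmt13 (q : ℕ) (P L : Type) [Membership P L] [Fintype P] [Fintype L]
    [Configuration.ProjectivePlane P L]
    (hq : Configuration.ProjectivePlane.order P L = q)
    (G : Type) [Group G] [IsCyclic G] (hG : Nat.card G = q ^ 2 + q + 1)
    [MulAction G P] [MulAction G L]
    (hinc : ∀ (g : G) (x : P) (l : L), x ∈ l ↔ g • x ∈ g • l)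
    (htrans : ∀ x y : P, ∃ g : G, g • x = y) :
    ∀ l l' : L, ∃! g : G, g • l = l' := by
  classical
  have hGpos : 0 < Nat.card G := by omega
  haveI : Finite G := Nat.finite_of_card_ne_zero (by omega)
  have hP : Fintype.card P = q ^ 2 + q + 1 := by
    rw [Configuration.ProjectivePlane.card_points P L, hq]
  have hL : Fintype.card L = q ^ 2 + q + 1 := by
    rw [← Configuration.ProjectivePlane.card_points_eq_card_lines P L, hP]
  -- The action on points is free.
  have hfree : ∀ (g : G) (x : P), g • x = x → g = 1 := by
    intro g x hgx
    have horb : (MulAction.orbit G x) = Set.univ := by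
      ext y
      simpa [MulAction.mem_orbit_iff] using htrans x y
    have hcardorb : Nat.card (MulAction.orbit G x) = q ^ 2 + q + 1 := by
      rw [horb, Nat.card_congr (Equiv.Set.univ P), Nat.card_eq_fintype_card, hP]
    have hidx : (MulAction.stabilizer G x).index = q ^ 2 + q + 1 := by
      rw [Subgroup.index, ← Nat.card_congr (MulAction.orbitEquivQuotientStabilizer G x),
        hcardorb]
    have hst : Nat.card (MulAction.stabilizer G x) = 1 := by
      have := (MulAction.stabilizer G x).card_mul_index
      rw [hidx, hG] at this
      nlinarith [this]
    have : MulAction.stabilizer G x = ⊥ := Subgroup.card_eq_one.mp hst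
    have hgmem : g ∈ MulAction.stabilizer G x := hgx
    rw [this] at hgmem
    simpa using hgmem
  -- The action on lines is free.
  have hlfree : ∀ (g : G) (l : L), g • l = l → g = 1 := by
    intro g l hgl
    set H := Subgroup.zpowers g with hH
    have hg : g ∈ MulAction.stabilizer G l := hgl
    have hHstab : H ≤ MulAction.stabilizer G l := by
      rw [hH, Subgroup.zpowers_le]; exact hg
    have hHl : ∀ h : H, (h : G) • l = l := fun h => hHstab h.2
    letI : SMul H {x : P // x ∈ l} :=
      ⟨fun h x => ⟨(h : G) • x.1, by
        have := (hinc (h : G) x.1 l).mp x.2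
        rwa [hHl h] at this⟩⟩
    letI : MulAction H {x : P // x ∈ l} :=
      { one_smul := fun x => Subtype.ext (one_smul G x.1)
        mul_smul := fun h h' x => Subtype.ext (mul_smul (h : G) (h' : G) x.1) }
    have key : Nat.card H ∣ Nat.card {x : P // x ∈ l} := by
      refine free_action_card_dvd ?_
      intro h x hx
      have hx' : (h : G) • x.1 = x.1 := congrArg Subtype.val hx
      exact Subtype.ext (hfree _ _ hx')
    have hcardS : Nat.card {x : P // x ∈ l} = q + 1 := by
      have := Configuration.ProjectivePlane.pointCount_eq P l
      rwa [Configuration.pointCount, hq] at this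
    have hord : orderOf g ∣ q + 1 := by
      rwa [hcardS, Nat.card_zpowers] at key
    have hord2 : orderOf g ∣ q ^ 2 + q + 1 := hG ▸ orderOf_dvd_natCard g
    have hcop : Nat.Coprime (q + 1) (q ^ 2 + q + 1) := by
      have h1 : q ^ 2 + q + 1 = 1 + (q + 1) * q := by ring
      unfold Nat.Coprime
      rw [h1, Nat.gcd_add_mul_left_right, Nat.gcd_one_right]
    have : orderOf g = 1 := Nat.dvd_one.mp (hcop ▸ Nat.dvd_gcd hord hord2)
    exact orderOf_eq_one_iff.mp this
  -- Regularity on lines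
  intro l l'
  have hstabl : MulAction.stabilizer G l = ⊥ := by
    ext g; simp only [MulAction.mem_stabilizer_iff, Subgroup.mem_bot]
    exact ⟨fun h => hlfree g l h, by rintro rfl; exact one_smul _ _⟩
  have hcardorb : Nat.card (MulAction.orbit G l) = q ^ 2 + q + 1 := by
    rw [← Nat.card_congr (MulAction.orbitEquivQuotientStabilizer G l).symm]
    rw [show Nat.card (G ⧸ MulAction.stabilizer G l) = (MulAction.stabilizer G l).index from rfl,
      hstabl, Subgroup.index_bot, hG]
  have horb : MulAction.orbit G l = Set.univ := by
    apply Set.eq_of_subset_of_ncard_le (Set.subset_univ _)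
    rw [Set.ncard_univ, ← Nat.card_coe_set_eq, hcardorb, Nat.card_eq_fintype_card, hL]
  have hl' : l' ∈ MulAction.orbit G l := horb ▸ Set.mem_univ l'
  obtain ⟨g, hg⟩ := hl'
  refine ⟨g, hg, fun g' hg' => ?_⟩
  have h1 : (g⁻¹ * g') • l = l := by
    rw [mul_smul, hg', ← hg, inv_smul_smul]
  have h2 : g⁻¹ * g' = 1 := hlfree _ _ h1
  rw [← mul_left_cancel_iff (a := g⁻¹), h2, inv_mul_cancel]
end

section
/- Let b = PG(1,q) ⊆ PG(1,q^3) and let H ≤ PGL(2,q^3) be the stabilizer of b (setwise), of order q(q^2-1). If P ∈ PG(1,q^3) \ b, then the stabilizer H_P is trivial, and hence H acts transitively on PG(1,q^3) \ b. -/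
open Matrix

/-- The order-q-subline of PG(1,q^3): image of the canonical subline PG(1,q) under the
homography induced by g ∈ GL(2,q^3). `Subline k F 1` is b = PG(1,q) itself. -/
def Subline (k F : Type) [Field k] [Field F] [Algebra k F]
    (g : GL (Fin 2) F) : Set (Projectivization F (Fin 2 → F)) :=
  {x | ∃ v : Fin 2 → k, v ≠ 0 ∧ ∃ c : F, c ≠ 0 ∧
    x.rep = c • (g : Matrix (Fin 2) (Fin 2) F).mulVec (fun i => algebraMap k F (v i))}

section helpers

variable {k F : Type} [Field k] [Field F] [Algebra k F]

lemma emb_eq_zero_iff (v : Fin 2 → k) :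
    (fun i => algebraMap k F (v i)) = 0 ↔ v = 0 := by
  constructor
  · intro h
    funext i
    have := congrFun h i
    simpa using (algebraMap k F).injective (by simpa using this)
  · intro h; subst h; funext i; simp

lemma map_mulVec' (M₀ : Matrix (Fin 2) (Fin 2) k) (v : Fin 2 → k) :
    (M₀.map (algebraMap k F)).mulVec (fun i => algebraMap k F (v i)) =
      fun i => algebraMap k F (M₀.mulVec v i) := by
  funext i
  simp [Matrix.mulVec, dotProduct, Fin.sum_univ_two, Matrix.map_apply, map_add, _root_.map_mul]

lemma mem_subline_mk (g : GL (Fin 2) F) (w : Fin 2 → F) (hw : w ≠ 0) :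
    Projectivization.mk F w hw ∈ Subline k F g ↔
      ∃ v : Fin 2 → k, v ≠ 0 ∧ ∃ c : F, c ≠ 0 ∧
        w = c • (g : Matrix (Fin 2) (Fin 2) F).mulVec (fun i => algebraMap k F (v i)) := by
  obtain ⟨a, ha⟩ := Projectivization.exists_smul_eq_mk_rep F w hw
  constructor
  · rintro ⟨v, hv, c, hc, hrep⟩
    refine ⟨v, hv, (a : F)⁻¹ * c, by simp [hc, a.ne_zero], ?_⟩
    have : (a : F) • w = c • _ := ha.symm ▸ hrep
    rw [mul_smul, ← this, ← smul_assoc]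
    simp
  · rintro ⟨v, hv, c, hc, hrep⟩
    refine ⟨v, hv, (a : F) * c, by simp [hc, a.ne_zero], ?_⟩
    rw [← ha, hrep, mul_smul]
    rfl

end helpers

section helpers2

variable {k F : Type} [Field k] [Field F] [Algebra k F]

lemma det_ne_zero_of_eq (g : GL (Fin 2) F) (t : F) (ht : t ≠ 0)
    (M₀ : Matrix (Fin 2) (Fin 2) k)
    (h : (g : Matrix (Fin 2) (Fin 2) F) = t • M₀.map (algebraMap k F)) :
    M₀.det ≠ 0 := by
  intro h0
  have hdet : IsUnit (g : Matrix (Fin 2) (Fin 2) F).det :=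
    (Matrix.isUnit_iff_isUnit_det _).1 g.isUnit
  rw [h, Matrix.det_smul, show (M₀.map (algebraMap k F)) = (algebraMap k F).mapMatrix M₀ from rfl,
    ← RingHom.map_det, h0] at hdet
  simp at hdet

lemma subline_eq_one_of (g : GL (Fin 2) F) (t : F) (ht : t ≠ 0)
    (M₀ : Matrix (Fin 2) (Fin 2) k)
    (h : (g : Matrix (Fin 2) (Fin 2) F) = t • M₀.map (algebraMap k F)) :
    Subline k F g = Subline k F 1 := by
  have hd : M₀.det ≠ 0 := det_ne_zero_of_eq g t ht M₀ h
  have hd' : IsUnit M₀.det := Ne.isUnit hd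
  have hinv : M₀⁻¹ * M₀ = 1 := Matrix.nonsing_inv_mul M₀ hd'
  have hinv' : M₀ * M₀⁻¹ = 1 := Matrix.mul_nonsing_inv M₀ hd'
  have hMv : ∀ v : Fin 2 → k, v ≠ 0 → M₀.mulVec v ≠ 0 := by
    intro v hv h0
    apply hv
    have : M₀⁻¹.mulVec (M₀.mulVec v) = v := by
      rw [Matrix.mulVec_mulVec, hinv, Matrix.one_mulVec]
    rw [h0] at this
    rw [← this, Matrix.mulVec_zero]
  ext x
  simp only [Subline, Set.mem_setOf_eq]
  constructor
  · rintro ⟨v, hv, c, hc, hrep⟩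
    refine ⟨M₀.mulVec v, hMv v hv, c * t, mul_ne_zero hc ht, ?_⟩
    rw [hrep, h, Matrix.smul_mulVec, map_mulVec']
    simp only [Units.val_one, Matrix.one_mulVec]
    rw [smul_smul]
  · rintro ⟨v, hv, c, hc, hrep⟩
    have hv' : M₀⁻¹.mulVec v ≠ 0 := by
      intro h0
      apply hv
      have : M₀.mulVec (M₀⁻¹.mulVec v) = v := by
        rw [Matrix.mulVec_mulVec, hinv', Matrix.one_mulVec]
      rw [h0, Matrix.mulVec_zero] at this
      exact this.symm
    refine ⟨M₀⁻¹.mulVec v, hv', c * t⁻¹, mul_ne_zero hc (inv_ne_zero ht), ?_⟩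
    rw [h, Matrix.smul_mulVec, map_mulVec', Matrix.mulVec_mulVec, hinv',
      Matrix.one_mulVec]
    rw [hrep]
    simp only [Units.val_one, Matrix.one_mulVec]
    rw [smul_smul, mul_assoc, inv_mul_cancel₀ ht, mul_one]

end helpers2

section helpers3

variable {k F : Type} [Field k] [Field F] [Algebra k F]

lemma structure_of_subline_eq (g : GL (Fin 2) F) (hg : Subline k F g = Subline k F 1) :
    ∃ t : F, t ≠ 0 ∧ ∃ M₀ : Matrix (Fin 2) (Fin 2) k,
      (g : Matrix (Fin 2) (Fin 2) F) = t • M₀.map (algebraMap k F) := by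
  set M : Matrix (Fin 2) (Fin 2) F := (g : Matrix (Fin 2) (Fin 2) F) with hM
  have hMv : ∀ v : Fin 2 → k, v ≠ 0 → M.mulVec (fun i => algebraMap k F (v i)) ≠ 0 := by
    intro v hv h0
    apply hv
    rw [← emb_eq_zero_iff (F := F)]
    have : ((g⁻¹ : GL (Fin 2) F) : Matrix (Fin 2) (Fin 2) F).mulVec
        (M.mulVec (fun i => algebraMap k F (v i))) = (fun i => algebraMap k F (v i)) := by
      rw [Matrix.mulVec_mulVec, ← Units.val_mul, inv_mul_cancel g, Units.val_one,
        Matrix.one_mulVec]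
    rw [h0, Matrix.mulVec_zero] at this
    exact this.symm
  have key : ∀ v : Fin 2 → k, v ≠ 0 → ∃ w : Fin 2 → k, w ≠ 0 ∧ ∃ c : F, c ≠ 0 ∧
      M.mulVec (fun i => algebraMap k F (v i)) = c • (fun i => algebraMap k F (w i)) := by
    intro v hv
    have hmem : Projectivization.mk F _ (hMv v hv) ∈ Subline k F g :=
      (mem_subline_mk g _ (hMv v hv)).2 ⟨v, hv, 1, one_ne_zero, (one_smul _ _).symm⟩
    rw [hg] at hmem
    obtain ⟨w, hw, c, hc, hrep⟩ := (mem_subline_mk 1 _ (hMv v hv)).1 hmem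
    refine ⟨w, hw, c, hc, ?_⟩
    rw [hrep]
    simp [Units.val_one, Matrix.one_mulVec]
  obtain ⟨w₀, hw₀, c₀, hc₀, E₀⟩ := key ![1, 0] (by intro h; simpa using congrFun h 0)
  obtain ⟨w₁, hw₁, c₁, hc₁, E₁⟩ := key ![0, 1] (by intro h; simpa using congrFun h 1)
  obtain ⟨w₂, hw₂, c₂, hc₂, E₂⟩ := key ![1, 1] (by intro h; simpa using congrFun h 0)
  -- column identities
  have col0 : ∀ i, M i 0 = c₀ * algebraMap k F (w₀ i) := by
    intro i
    have := congrFun E₀ i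
    simpa [Matrix.mulVec, dotProduct, Fin.sum_univ_two] using this
  have col1 : ∀ i, M i 1 = c₁ * algebraMap k F (w₁ i) := by
    intro i
    have := congrFun E₁ i
    simpa [Matrix.mulVec, dotProduct, Fin.sum_univ_two] using this
  have sum2 : ∀ i, c₀ * algebraMap k F (w₀ i) + c₁ * algebraMap k F (w₁ i)
      = c₂ * algebraMap k F (w₂ i) := by
    intro i
    have := congrFun E₂ i
    simp only [Matrix.mulVec, dotProduct, Fin.sum_univ_two] at this
    simp only [Matrix.cons_val_zero, Matrix.cons_val_one, Matrix.head_cons, _root_.map_one,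
      mul_one] at this
    rw [col0 i, col1 i] at this
    simpa using this
  -- determinant
  have hdet : IsUnit M.det := (Matrix.isUnit_iff_isUnit_det _).1 g.isUnit
  have hdetM : M.det = M 0 0 * M 1 1 - M 0 1 * M 1 0 := Matrix.det_fin_two M
  set d : k := w₀ 0 * w₁ 1 - w₀ 1 * w₁ 0 with hd
  have hdF : M.det = c₀ * c₁ * algebraMap k F d := by
    rw [hdetM, col0 0, col0 1, col1 0, col1 1, hd]
    push_cast [map_sub, _root_.map_mul]
    ring
  have hdne : d ≠ 0 := by
    intro h0
    rw [h0, map_zero, mul_zero] at hdF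
    exact hdet.ne_zero hdF
  have hdFne : algebraMap k F d ≠ 0 := fun h0 => hdne ((algebraMap k F).injective (by simpa using h0))
  -- Cramer
  set α : k := (w₂ 0 * w₁ 1 - w₂ 1 * w₁ 0) / d with hα
  set β : k := (w₀ 0 * w₂ 1 - w₀ 1 * w₂ 0) / d with hβ
  have hcα : c₀ = c₂ * algebraMap k F α := by
    have h1 := sum2 0
    have h2 := sum2 1
    have hnum : c₀ * algebraMap k F d
        = c₂ * algebraMap k F (w₂ 0 * w₁ 1 - w₂ 1 * w₁ 0) := by
      push_cast [map_sub, _root_.map_mul, hd]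
      linear_combination algebraMap k F (w₁ 1) * h1 - algebraMap k F (w₁ 0) * h2
    rw [hα, map_div₀, ← mul_div_assoc, eq_div_iff hdFne]
    exact hnum
  have hcβ : c₁ = c₂ * algebraMap k F β := by
    have h1 := sum2 0
    have h2 := sum2 1
    have hnum : c₁ * algebraMap k F d
        = c₂ * algebraMap k F (w₀ 0 * w₂ 1 - w₀ 1 * w₂ 0) := by
      push_cast [map_sub, _root_.map_mul, hd]
      linear_combination algebraMap k F (w₀ 0) * h2 - algebraMap k F (w₀ 1) * h1
    rw [hβ, map_div₀, ← mul_div_assoc, eq_div_iff hdFne]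
    exact hnum
  refine ⟨c₂, hc₂, Matrix.of fun i j => if j = 0 then α * w₀ i else β * w₁ i, ?_⟩
  ext i j
  rw [Matrix.smul_apply, Matrix.map_apply, Matrix.of_apply]
  by_cases hj : j = 0
  · subst hj
    rw [if_pos rfl, col0 i, hcα, smul_eq_mul]
    push_cast [_root_.map_mul]
    ring
  · have hj1 : j = 1 := by
      simp only [Fin.ext_iff] at hj ⊢
      omega
    subst hj1
    rw [if_neg hj, col1 i, hcβ, smul_eq_mul]
    push_cast [_root_.map_mul]
    ring

end helpers3

section helpers4

variable {k F : Type} [Field k] [Field F] [Algebra k F] [Fintype F]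

open Polynomial in
lemma mem_range_of_quad (hrank : Module.finrank k F = 3) (α : F) (a b c : k)
    (h0 : ¬(a = 0 ∧ b = 0 ∧ c = 0))
    (hrel : algebraMap k F a * α ^ 2 + algebraMap k F b * α + algebraMap k F c = 0) :
    ∃ a₀ : k, algebraMap k F a₀ = α := by
  have : Finite F := Finite.of_fintype F
  set P : k[X] := C a * X ^ 2 + C b * X + C c with hP
  have hPne : P ≠ 0 := by
    intro h
    apply h0
    refine ⟨?_, ?_, ?_⟩
    · have := congrArg (fun Q => Polynomial.coeff Q 2) h
      simpa [hP, coeff_C] using this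
    · have := congrArg (fun Q => Polynomial.coeff Q 1) h
      simpa [hP, coeff_C] using this
    · have := congrArg (fun Q => Polynomial.coeff Q 0) h
      simpa [hP, coeff_C] using this
  have haeval : (aeval α) P = 0 := by
    simp only [hP, map_add, _root_.map_mul, aeval_C, aeval_X, map_pow]
    linear_combination hrel
  have hint : IsIntegral k α := IsIntegral.of_finite k α
  have hdvd : minpoly k α ∣ P := minpoly.dvd k α haeval
  have hdegP : P.natDegree ≤ 2 := by
    rw [hP]
    compute_degree
  have hdeg : (minpoly k α).natDegree ≤ 2 :=
    le_trans (Polynomial.natDegree_le_of_dvd hdvd hPne) hdegP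
  have hdvd3 : (minpoly k α).natDegree ∣ 3 := by
    rw [← hrank]
    exact minpoly.degree_dvd hint
  have hne : minpoly k α ≠ 0 := minpoly.ne_zero hint
  have h1 : (minpoly k α).natDegree = 1 := by
    rcases (Nat.dvd_prime Nat.prime_three).1 hdvd3 with h | h
    · exact h
    · omega
  have hdeg1 : (minpoly k α).degree = 1 := by
    rw [Polynomial.degree_eq_natDegree hne, h1]
    rfl
  obtain ⟨a₀, ha₀⟩ := minpoly.mem_range_of_degree_eq_one k α hdeg1
  exact ⟨a₀, ha₀⟩

lemma lin_zero (hrank : Module.finrank k F = 3) (α : F)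
    (hα : ∀ a₀ : k, algebraMap k F a₀ ≠ α) (b c : k)
    (h : algebraMap k F b * α + algebraMap k F c = 0) : b = 0 ∧ c = 0 := by
  by_contra hcon
  obtain ⟨a₀, ha₀⟩ := mem_range_of_quad hrank α 0 b c (by tauto) (by rw [map_zero]; ring_nf; linear_combination h)
  exact hα a₀ ha₀

lemma coords_of_notMem (x : Projectivization F (Fin 2 → F))
    (hx : x ∉ Subline k F (1 : GL (Fin 2) F)) :
    x.rep 1 ≠ 0 ∧ ∀ a₀ : k, algebraMap k F a₀ ≠ x.rep 0 / x.rep 1 := by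
  have hrep := x.rep_nonzero
  have h1 : x.rep 1 ≠ 0 := by
    intro h1
    apply hx
    have h0 : x.rep 0 ≠ 0 := by
      intro h0
      apply hrep
      funext i
      fin_cases i
      · exact h0
      · exact h1
    refine ⟨![1, 0], by intro h; simpa using congrFun h 0, x.rep 0, h0, ?_⟩
    simp only [Units.val_one, Matrix.one_mulVec]
    funext i
    fin_cases i <;> simp [h1]
  refine ⟨h1, ?_⟩
  intro a₀ ha₀
  apply hx
  refine ⟨![a₀, 1], by intro h; simpa using congrFun h 1, x.rep 1, h1, ?_⟩
  simp only [Units.val_one, Matrix.one_mulVec]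
  funext i
  fin_cases i
  · show x.rep 0 = x.rep 1 * algebraMap k F (![a₀, 1] 0)
    simp only [Matrix.cons_val_zero]
    rw [ha₀]
    field_simp
  · show x.rep 1 = x.rep 1 * algebraMap k F (![a₀, 1] 1)
    simp

end helpers4

/-- Let H ≤ PGL(2,q^3) be the (setwise) stabilizer of b = PG(1,q). If
P ∉ b then the stabilizer H_P is trivial (in PGL: any element of H fixing P is
scalar), and hence H is transitive on PG(1,q^3) \ b. -/
theorem stmt16 (p n q : ℕ) (hp : p.Prime) (hn : 0 < n) (hq : q = p ^ n)
    (k F : Type) [Field k] [Field F] [Algebra k F] [Fintype k] [Fintype F]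
    (hk : Fintype.card k = q) (hF : Fintype.card F = q ^ 3) :
    ∃ H : Subgroup (GL (Fin 2) F),
      (∀ g : GL (Fin 2) F, g ∈ H ↔ Subline k F g = Subline k F 1) ∧
      ∀ x : Projectivization F (Fin 2 → F), x ∉ Subline k F 1 →
        -- H_P is trivial in PGL(2,q^3):
        (∀ g ∈ H, (∃ c : F, (g : Matrix (Fin 2) (Fin 2) F).mulVec x.rep = c • x.rep) →
          ∃ a : F, (g : Matrix (Fin 2) (Fin 2) F) = a • (1 : Matrix (Fin 2) (Fin 2) F)) ∧
        -- H is transitive on the complement of b: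
        (∀ y : Projectivization F (Fin 2 → F), y ∉ Subline k F 1 →
          ∃ g ∈ H, ∃ c : F,
            y.rep = c • (g : Matrix (Fin 2) (Fin 2) F).mulVec x.rep) := by
  have h2q : 2 ≤ q := by
    have h1 : p ^ 1 ≤ p ^ n := Nat.pow_le_pow_right hp.pos hn
    rw [pow_one] at h1
    have := hp.two_le
    rw [hq]
    omega
  have hrank : Module.finrank k F = 3 := by
    have hc := Module.card_eq_pow_finrank (K := k) (V := F)
    rw [hk, hF] at hc
    exact (Nat.pow_right_injective h2q hc.symm)
  refine ⟨{ carrier := {g | Subline k F g = Subline k F 1},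
            one_mem' := rfl,
            mul_mem' := ?_,
            inv_mem' := ?_ }, fun g => Iff.rfl, ?_⟩
  · rintro a b (ha : Subline k F a = _) (hb : Subline k F b = _)
    obtain ⟨s, hs, A, hA⟩ := structure_of_subline_eq a ha
    obtain ⟨t, ht, B, hB⟩ := structure_of_subline_eq b hb
    show Subline k F (a * b) = Subline k F 1
    refine subline_eq_one_of (a * b) (s * t) (mul_ne_zero hs ht) (A * B) ?_
    rw [Units.val_mul, hA, hB, Matrix.map_mul, Matrix.smul_mul, Matrix.mul_smul, smul_smul]
  · rintro a (ha : Subline k F a = _)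
    obtain ⟨s, hs, A, hA⟩ := structure_of_subline_eq a ha
    have hdA : A.det ≠ 0 := det_ne_zero_of_eq a s hs A hA
    have hinv : A⁻¹ * A = 1 := Matrix.nonsing_inv_mul A hdA.isUnit
    have hX : (s⁻¹ • (A⁻¹).map (algebraMap k F)) * (a : Matrix (Fin 2) (Fin 2) F) = 1 := by
      rw [hA, Matrix.smul_mul, Matrix.mul_smul, smul_smul, inv_mul_cancel₀ hs, one_smul,
        ← Matrix.map_mul, hinv, Matrix.map_one _ (map_zero _) (_root_.map_one _)]
    have hval : ((a⁻¹ : GL (Fin 2) F) : Matrix (Fin 2) (Fin 2) F)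
        = s⁻¹ • (A⁻¹).map (algebraMap k F) := by
      calc ((a⁻¹ : GL (Fin 2) F) : Matrix (Fin 2) (Fin 2) F)
          = 1 * ((a⁻¹ : GL (Fin 2) F) : Matrix (Fin 2) (Fin 2) F) := (one_mul _).symm
        _ = (s⁻¹ • (A⁻¹).map (algebraMap k F)) * (a : Matrix (Fin 2) (Fin 2) F)
            * ((a⁻¹ : GL (Fin 2) F) : Matrix (Fin 2) (Fin 2) F) := by rw [hX]
        _ = (s⁻¹ • (A⁻¹).map (algebraMap k F)) * ((a : Matrix (Fin 2) (Fin 2) F)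
            * ((a⁻¹ : GL (Fin 2) F) : Matrix (Fin 2) (Fin 2) F)) := mul_assoc _ _ _
        _ = s⁻¹ • (A⁻¹).map (algebraMap k F) := by
            rw [← Units.val_mul]
            simp
    show Subline k F a⁻¹ = Subline k F 1
    exact subline_eq_one_of a⁻¹ s⁻¹ (inv_ne_zero hs) A⁻¹ hval
  · intro x hx
    obtain ⟨hX1, hα⟩ := coords_of_notMem (k := k) x hx
    have hX0 : x.rep 0 = (x.rep 0 / x.rep 1) * x.rep 1 := (div_mul_cancel₀ _ hX1).symm
    set α : F := x.rep 0 / x.rep 1 with hαdef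
    constructor
    · rintro g hg ⟨c, hc⟩
      obtain ⟨t, ht, M₀, hM₀⟩ := structure_of_subline_eq g hg
      rw [hM₀] at hc
      have eq0 := congrFun hc 0
      have eq1 := congrFun hc 1
      simp only [Matrix.mulVec, dotProduct, Fin.sum_univ_two, Matrix.smul_apply,
        Matrix.map_apply, smul_eq_mul, Pi.smul_apply] at eq0 eq1
      rw [hX0] at eq0 eq1
      have hprod : (algebraMap k F (M₀ 1 0) * α ^ 2
          + (algebraMap k F (M₀ 1 1) - algebraMap k F (M₀ 0 0)) * α
          - algebraMap k F (M₀ 0 1)) * (t * x.rep 1) = 0 := by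
        linear_combination α * eq1 - eq0
      have hexpr : algebraMap k F (M₀ 1 0) * α ^ 2
          + (algebraMap k F (M₀ 1 1) - algebraMap k F (M₀ 0 0)) * α
          - algebraMap k F (M₀ 0 1) = 0 := by
        rcases mul_eq_zero.1 hprod with h | h
        · exact h
        · exact absurd h (mul_ne_zero ht hX1)
      have hcoef : M₀ 1 0 = 0 ∧ M₀ 1 1 - M₀ 0 0 = 0 ∧ -(M₀ 0 1) = 0 := by
        by_contra hcon
        obtain ⟨a₀, ha₀⟩ := mem_range_of_quad hrank α (M₀ 1 0) (M₀ 1 1 - M₀ 0 0) (-(M₀ 0 1))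
          hcon (by push_cast [map_sub, map_neg]; linear_combination hexpr)
        exact hα a₀ ha₀
      obtain ⟨hz1, hz2, hz3⟩ := hcoef
      have h11 : M₀ 1 1 = M₀ 0 0 := sub_eq_zero.1 hz2
      have h01 : M₀ 0 1 = 0 := neg_eq_zero.1 hz3
      refine ⟨t * algebraMap k F (M₀ 0 0), ?_⟩
      rw [hM₀]
      ext i j
      rw [Matrix.smul_apply, Matrix.map_apply, Matrix.smul_apply, Matrix.one_apply]
      by_cases hij : i = j
      · subst hij
        rw [if_pos rfl, smul_eq_mul, smul_eq_mul, mul_one]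
        by_cases hi : i = 0
        · subst hi; rfl
        · have : i = 1 := by simp only [Fin.ext_iff] at hi ⊢; omega
          subst this
          rw [h11]
      · rw [if_neg hij, smul_eq_mul, smul_eq_mul, mul_zero]
        by_cases hi : i = 0
        · subst hi
          have : j = 1 := by simp only [Fin.ext_iff] at hij ⊢; omega
          subst this
          rw [h01, map_zero, mul_zero]
        · have hi1 : i = 1 := by simp only [Fin.ext_iff] at hi ⊢; omega
          have hj0 : j = 0 := by subst hi1; simp only [Fin.ext_iff] at hij ⊢; omega
          subst hi1; subst hj0
          rw [hz1, map_zero, mul_zero]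
    · -- transitivity
      intro y hy
      obtain ⟨hY1, hβ⟩ := coords_of_notMem (k := k) y hy
      have hY0 : y.rep 0 = (y.rep 0 / y.rep 1) * y.rep 1 := (div_mul_cancel₀ _ hY1).symm
      set β : F := y.rep 0 / y.rep 1 with hβdef
      have hnotli : ¬ LinearIndependent k ![1, α, β, β * α] := by
        intro hli
        have hle := hli.fintype_card_le_finrank
        rw [hrank] at hle
        simp at hle
      obtain ⟨f, hsum, i0, hi0⟩ := Fintype.not_linearIndependent_iff.1 hnotli
      simp only [Fin.sum_univ_four, Algebra.smul_def, Matrix.cons_val_zero, Matrix.cons_val_one,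
        Matrix.head_cons, Matrix.cons_val_two, Matrix.tail_cons, Matrix.cons_val_three,
        mul_one] at hsum
      have hkey : algebraMap k F (f 1) * α + algebraMap k F (f 0)
          = (algebraMap k F (-(f 3)) * α + algebraMap k F (-(f 2))) * β := by
        push_cast [map_neg]
        linear_combination hsum
      have hden : algebraMap k F (-(f 3)) * α + algebraMap k F (-(f 2)) ≠ 0 := by
        intro h0
        obtain ⟨hc0, hd0⟩ := lin_zero hrank α hα (-(f 3)) (-(f 2)) h0
        have hab : algebraMap k F (f 1) * α + algebraMap k F (f 0) = 0 := by
          rw [hkey, h0, zero_mul]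
        obtain ⟨ha0, hb0⟩ := lin_zero hrank α hα (f 1) (f 0) hab
        have h2 : f 2 = 0 := by rwa [neg_eq_zero] at hd0
        have h3 : f 3 = 0 := by rwa [neg_eq_zero] at hc0
        fin_cases i0
        · exact hi0 hb0
        · exact hi0 ha0
        · exact hi0 h2
        · exact hi0 h3
      set D : F := algebraMap k F (-(f 3)) * α + algebraMap k F (-(f 2)) with hDdef
      have hdet : f 1 * (-(f 2)) - f 0 * (-(f 3)) ≠ 0 := by
        intro hdet0
        rw [hDdef] at hkey hden
        by_cases hc3 : -(f 3) = 0
        · have hd2 : -(f 2) ≠ 0 := by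
            intro h
            apply hden
            rw [hc3, h]
            simp
          have hf1 : f 1 = 0 := by
            rw [hc3] at hdet0
            have : f 1 * (-(f 2)) = 0 := by linear_combination hdet0
            rcases mul_eq_zero.1 this with h | h
            · exact h
            · exact absurd h hd2
          refine hβ (f 0 / (-(f 2))) ?_
          rw [map_div₀]
          rw [eq_comm, eq_div_iff (by
            intro h
            exact hd2 ((algebraMap k F).injective (by rw [h, map_zero])))]
          rw [hc3, hf1] at hkey
          simp only [map_zero, zero_mul, zero_add] at hkey
          linear_combination -hkey
        · -- -(f 3) ≠ 0
          have hcF : algebraMap k F (-(f 3)) ≠ 0 := by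
            intro h
            exact hc3 ((algebraMap k F).injective (by rw [h, map_zero]))
          have hbc : algebraMap k F (f 0) * algebraMap k F (-(f 3))
              = algebraMap k F (f 1) * algebraMap k F (-(f 2)) := by
            rw [← _root_.map_mul, ← _root_.map_mul]
            congr 1
            linear_combination -hdet0
          have hmid : algebraMap k F (f 1) * α + algebraMap k F (f 0)
              = algebraMap k F (f 1 / (-(f 3)))
                * (algebraMap k F (-(f 3)) * α + algebraMap k F (-(f 2))) := by
            rw [map_div₀, div_mul_eq_mul_div, eq_comm, div_eq_iff hcF]
            linear_combination -hbc
          have : algebraMap k F (f 1 / (-(f 3)))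
              * (algebraMap k F (-(f 3)) * α + algebraMap k F (-(f 2)))
              = (algebraMap k F (-(f 3)) * α + algebraMap k F (-(f 2))) * β := by
            rw [← hmid, hkey]
          have hfin : algebraMap k F (f 1 / (-(f 3))) = β := by
            have h2 := this
            rw [mul_comm] at h2
            exact mul_left_cancel₀ hden h2
          exact hβ _ hfin
      -- build the matrix
      set M₀ : Matrix (Fin 2) (Fin 2) k := Matrix.of fun i j =>
        if i = 0 then (if j = 0 then f 1 else f 0) else (if j = 0 then -(f 3) else -(f 2))
        with hM₀def
      have hdetM₀ : M₀.det ≠ 0 := by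
        rw [Matrix.det_fin_two]
        simpa [hM₀def] using hdet
      have hdetF : (M₀.map (algebraMap k F)).det ≠ 0 := by
        rw [show M₀.map (algebraMap k F) = (algebraMap k F).mapMatrix M₀ from rfl,
          ← RingHom.map_det]
        intro h
        exact hdetM₀ ((algebraMap k F).injective (by rw [h, map_zero]))
      refine ⟨Matrix.GeneralLinearGroup.mkOfDetNeZero (M₀.map (algebraMap k F)) hdetF, ?_, ?_⟩
      · show Subline k F _ = Subline k F 1
        exact subline_eq_one_of _ 1 one_ne_zero M₀ (by rw [one_smul]; rfl)
      · refine ⟨y.rep 1 / (x.rep 1 * D), ?_⟩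
        have hgv : ((Matrix.GeneralLinearGroup.mkOfDetNeZero (M₀.map (algebraMap k F)) hdetF :
            GL (Fin 2) F) : Matrix (Fin 2) (Fin 2) F) = M₀.map (algebraMap k F) := rfl
        rw [hgv]
        funext i
        rw [Pi.smul_apply, smul_eq_mul]
        have hmv : ∀ i : Fin 2, (M₀.map (algebraMap k F)).mulVec x.rep i
            = algebraMap k F (M₀ i 0) * x.rep 0 + algebraMap k F (M₀ i 1) * x.rep 1 := by
          intro i
          simp [Matrix.mulVec, dotProduct, Fin.sum_univ_two, Matrix.map_apply]
        rw [hmv]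
        by_cases hi : i = 0
        · subst hi
          have hM00 : M₀ 0 0 = f 1 := by simp [hM₀def]
          have hM01 : M₀ 0 1 = f 0 := by simp [hM₀def]
          rw [hM00, hM01, hY0, hX0]
          rw [show algebraMap k F (f 1) * (α * x.rep 1) + algebraMap k F (f 0) * x.rep 1
              = x.rep 1 * D * β from by linear_combination x.rep 1 * hkey]
          rw [← mul_assoc, div_mul_cancel₀ _ (mul_ne_zero hX1 hden)]
          ring
        · have hi1 : i = 1 := by simp only [Fin.ext_iff] at hi ⊢; omega
          subst hi1
          have hM10 : M₀ 1 0 = -(f 3) := by simp [hM₀def]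
          have hM11 : M₀ 1 1 = -(f 2) := by simp [hM₀def]
          rw [hM10, hM11, hX0]
          rw [show algebraMap k F (-(f 3)) * (α * x.rep 1) + algebraMap k F (-(f 2)) * x.rep 1
              = x.rep 1 * D from by rw [hDdef]; ring]
          rw [div_mul_cancel₀ _ (mul_ne_zero hX1 hden)]
end

section
/- Suppose q is even and P = (1, τ^{q^2}, τ^{2q^2}). For every point (x,y,z) of the subplane PG(2,q) (x,y,z ∈ GF(q) not all zero), the line joining (x,y,z) to P meets the line ℓ = [-ττ^q, τ+τ^q, -1] in a point E + θE^q with θ^{q^2+q+1} = 1 = -1; hence (for q even) the projection of PG(2,q) from P onto ℓ equals the exterior splash {E + θE^q : θ^{q^2+q+1} = -1} of PG(2,q) onto ℓ. -/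
open Matrix

/-- f(x,y,z) = x(sτ² - tτ) + y(t - rτ²) + z(rτ - s), where (r,s,t) = (1, τ^{q²}, τ^{2q²}). -/
def fVal (k F : Type) [Field k] [Field F] [Algebra k F] (q : ℕ) (τ : F)
    (x y z : k) : F :=
  algebraMap k F x * (τ ^ (q ^ 2) * τ ^ 2 - τ ^ (2 * q ^ 2) * τ) +
  algebraMap k F y * (τ ^ (2 * q ^ 2) - 1 * τ ^ 2) +
  algebraMap k F z * (1 * τ - τ ^ (q ^ 2))

/-- g(x,y,z) = x(tτ^q - sτ^{2q}) + y(rτ^{2q} - t) + z(s - rτ^q), with (r,s,t) as above. -/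
def gVal (k F : Type) [Field k] [Field F] [Algebra k F] (q : ℕ) (τ : F)
    (x y z : k) : F :=
  algebraMap k F x * (τ ^ (2 * q ^ 2) * τ ^ q - τ ^ (q ^ 2) * τ ^ (2 * q)) +
  algebraMap k F y * (1 * τ ^ (2 * q) - τ ^ (2 * q ^ 2)) +
  algebraMap k F z * (τ ^ (q ^ 2) - 1 * τ ^ q)

/-!
The parameter is `θ = f / g` with `g = f ^ q²`, the image of `f` under the square of the
Frobenius `σ` of `F/k`; hence `θ` has norm `N(f) / N(σ² f) = 1`, i.e. `θ ^ (q² + q + 1) = 1`.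
Conversely, `σ²` generates the cyclic group `Gal(F/k)` of order 3, so by Hilbert 90 every
`θ` of norm one is `w / σ² w`, and every `w ≠ 0` is some `f(x, y, z)`: the map
`(x, y, z) ↦ f(x, y, z)` is `k`-linear from `k³` to `F` and injective: `f(x, y, z) = 0` puts the
rational point `(x, y, z)` on the chord `⟨E, E^{q²}⟩` of the conic `XZ = Y²`, hence also on its
Frobenius image `⟨E^q, E⟩`, and these chords meet only in the non-rational point `E`.
In characteristic 2 the conditions `= 1` and `= -1` agree.
-/

open FiniteField

section Frobenius

variable {K L : Type} [Field K] [Field L] [Algebra K L] [Fintype K] [Finite L]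

theorem frobeniusAlgEquivOfAlgebraic_pow_apply (n : ℕ) (x : L) :
    (frobeniusAlgEquivOfAlgebraic K L ^ n) x = x ^ Fintype.card K ^ n := by
  rw [AlgEquiv.coe_pow, coe_frobeniusAlgEquivOfAlgebraic_iterate]

theorem zpowers_frobeniusAlgEquivOfAlgebraic_pow_eq_top {m : ℕ}
    (hm : m.Coprime (Module.finrank K L)) :
    Subgroup.zpowers (frobeniusAlgEquivOfAlgebraic K L ^ m) = ⊤ := by
  refine eq_top_iff.2 fun g _ => ?_
  obtain ⟨n, rfl⟩ := (bijective_frobeniusAlgEquivOfAlgebraic_pow K L).2 g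
  obtain ⟨j, hj⟩ := exists_pow_eq_self_of_coprime (x := frobeniusAlgEquivOfAlgebraic K L)
    (n := m) (by rwa [orderOf_frobeniusAlgEquivOfAlgebraic])
  have hσ : frobeniusAlgEquivOfAlgebraic K L ∈
      Subgroup.zpowers (frobeniusAlgEquivOfAlgebraic K L ^ m) := by
    simpa only [hj] using Subgroup.npow_mem_zpowers (frobeniusAlgEquivOfAlgebraic K L ^ m) j
  exact Subgroup.pow_mem _ hσ n

theorem mem_range_algebraMap_of_pow_card_eq_self {x : L} (hx : x ^ Fintype.card K = x) :
    x ∈ Set.range (algebraMap K L) := by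
  have : Module.Finite K L := Module.Finite.of_finite
  refine (IsGalois.mem_range_algebraMap_iff_fixed x).2 fun g => ?_
  have hσ : frobeniusAlgEquivOfAlgebraic K L ∈ MulAction.stabilizer Gal(L/K) x := hx
  have := Subgroup.zpowers_le.2 hσ
  rw [← pow_one (frobeniusAlgEquivOfAlgebraic K L),
    zpowers_frobeniusAlgEquivOfAlgebraic_pow_eq_top (Nat.coprime_one_left _)] at this
  exact this (Subgroup.mem_top g)

theorem norm_eq_one_iff_exists_div_pow_card_pow {m : ℕ} (hm : m.Coprime (Module.finrank K L))
    {θ : L} : Algebra.norm K θ = 1 ↔ ∃ w : Lˣ, (w : L) / (w : L) ^ Fintype.card K ^ m = θ := by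
  have : Module.Finite K L := Module.Finite.of_finite
  simp_rw [← frobeniusAlgEquivOfAlgebraic_pow_apply]
  constructor
  · intro h
    have hgen (g : Gal(L/K)) : g ∈ Subgroup.zpowers (frobeniusAlgEquivOfAlgebraic K L ^ m) := by
      rw [zpowers_frobeniusAlgEquivOfAlgebraic_pow_eq_top hm]
      exact Subgroup.mem_top g
    obtain ⟨w, hw⟩ := groupCohomology.exists_div_of_norm_eq_one hgen h
    exact ⟨w, by simpa using hw⟩
  · rintro ⟨w, rfl⟩
    rw [div_eq_mul_inv, map_mul, Algebra.norm_inv, Algebra.norm_eq_of_algEquiv, mul_inv_cancel₀]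
    simp

end Frobenius

section Chord

variable {k F : Type} [Field k] [Field F] [Algebra k F]

/-- The line `[αβ, -(α + β), 1]` through `(1, α, α²)` and `(1, β, β²)`, evaluated at `(x, y, z)`. -/
def chordForm (x y z : k) (α β : F) : F :=
  algebraMap k F x * (α * β) - algebraMap k F y * (α + β) + algebraMap k F z

theorem chordForm_comm (x y z : k) (α β : F) : chordForm x y z α β = chordForm x y z β α := by
  simp only [chordForm]
  ring

theorem map_chordForm {Φ : Type} [FunLike Φ F F] [AlgHomClass Φ k F F] (φ : Φ) (x y z : k)
    (α β : F) : φ (chordForm x y z α β) = chordForm x y z (φ α) (φ β) := by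
  simp only [chordForm, map_add, map_sub, map_mul, AlgHomClass.commutes]

theorem eq_zero_of_chordForm_eq_zero {x y z : k} {τ α β : F}
    (hτ : τ ∉ Set.range (algebraMap k F)) (hαβ : α ≠ β)
    (hα : chordForm x y z τ α = 0) (hβ : chordForm x y z τ β = 0) : x = 0 ∧ y = 0 ∧ z = 0 := by
  have hy : algebraMap k F y = algebraMap k F x * τ := by
    have h : (α - β) * (algebraMap k F x * τ - algebraMap k F y) = 0 := by
      unfold chordForm at hα hβ
      linear_combination hα - hβ
    exact (sub_eq_zero.1 ((mul_eq_zero.1 h).resolve_left (sub_ne_zero.2 hαβ))).symm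
  obtain rfl : x = 0 := by
    by_contra hx
    exact hτ ⟨y / x, by rw [map_div₀, hy, mul_div_cancel_left₀ _ (by simpa using hx)]⟩
  obtain rfl : y = 0 := by simpa using hy
  exact ⟨rfl, rfl, by simpa [chordForm] using hα⟩

theorem fVal_eq_mul_chordForm (q : ℕ) (τ : F) (x y z : k) :
    fVal k F q τ x y z = (τ - τ ^ q ^ 2) * chordForm x y z τ (τ ^ q ^ 2) := by
  simp only [fVal, chordForm]
  ring

theorem gVal_eq_mul_chordForm (q : ℕ) (τ : F) (x y z : k) :
    gVal k F q τ x y z = (τ ^ q ^ 2 - τ ^ q) * chordForm x y z (τ ^ q ^ 2) (τ ^ q) := by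
  simp only [gVal, chordForm]
  ring

theorem fVal_sub (q : ℕ) (τ : F) (x y z x' y' z' : k) :
    fVal k F q τ x y z - fVal k F q τ x' y' z' = fVal k F q τ (x - x') (y - y') (z - z') := by
  simp only [fVal, map_sub]
  ring

theorem fVal_zero (q : ℕ) (τ : F) : fVal k F q τ 0 0 0 = 0 := by
  simp [fVal]

theorem det_eq_fVal_sub_mul_gVal (q : ℕ) (τ θ : F) (x y z : k) :
    Matrix.det (Matrix.of
      ![(fun i => algebraMap k F (![x, y, z] i)),
        ![1, τ ^ (q ^ 2), τ ^ (2 * q ^ 2)],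
        ![1, τ, τ ^ 2] + θ • ![1, τ ^ q, τ ^ (2 * q)]]) =
      fVal k F q τ x y z - θ * gVal k F q τ x y z := by
  rw [Matrix.det_fin_three]
  simp only [fVal, gVal, of_apply, cons_val', cons_val_zero, cons_val_one, cons_val_two,
    cons_val_fin_one, head_cons, head_fin_const, tail_cons, Pi.add_apply, Pi.smul_apply,
    smul_eq_mul]
  ring

theorem add_smul_mem_exteriorLine (q : ℕ) (τ θ : F) :
    -(τ * τ ^ q) * (![1, τ, τ ^ 2] + θ • ![1, τ ^ q, τ ^ (2 * q)]) 0 +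
      (τ + τ ^ q) * (![1, τ, τ ^ 2] + θ • ![1, τ ^ q, τ ^ (2 * q)]) 1 -
      (![1, τ, τ ^ 2] + θ • ![1, τ ^ q, τ ^ (2 * q)]) 2 = 0 := by
  simp only [Pi.add_apply, Pi.smul_apply, cons_val_zero, cons_val_one, cons_val_two, head_cons,
    tail_cons, smul_eq_mul]
  ring

end Chord

section Subplane

theorem pow_pow_three_eq_self {F : Type} [Field F] [Fintype F] {q : ℕ}
    (hF : Fintype.card F = q ^ 3) (a : F) : a ^ q ^ 3 = a := by
  rw [← hF, FiniteField.pow_card]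

variable {k F : Type} [Field k] [Field F] [Algebra k F] [Fintype k] [Fintype F] {q : ℕ}
  (hk : Fintype.card k = q) (hF : Fintype.card F = q ^ 3)
include hk hF

theorem finrank_eq_three : Module.finrank k F = 3 := by
  have h := Module.card_eq_pow_finrank (K := k) (V := F)
  rw [hF, hk] at h
  exact (Nat.pow_right_injective (hk ▸ Fintype.one_lt_card) h).symm

theorem pow_eq_one_iff_exists_units_div_pow (θ : F) :
    θ ^ (q ^ 2 + q + 1) = 1 ↔ ∃ w : Fˣ, (w : F) / (w : F) ^ q ^ 2 = θ := by
  have hq : 2 ≤ q := hk ▸ Fintype.one_lt_card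
  have hexp : (q ^ 3 - 1) / (q - 1) = q ^ 2 + q + 1 := by
    rw [← Nat.geomSum_eq hq]
    simp only [Finset.sum_range_succ, Finset.sum_range_zero]
    ring
  rw [← hk, ← norm_eq_one_iff_exists_div_pow_card_pow (by rw [finrank_eq_three hk hF]; norm_num),
    ← (algebraMap k F).injective.eq_iff, map_one, algebraMap_norm_eq_pow,
    Nat.card_eq_fintype_card, Nat.card_eq_fintype_card, hF, hk, hexp]

theorem fVal_pow_eq_gVal (τ : F) (x y z : k) :
    fVal k F q τ x y z ^ q ^ 2 = gVal k F q τ x y z := by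
  have hσ := frobeniusAlgEquivOfAlgebraic_pow_apply (K := k) (L := F) 2
  rw [hk] at hσ
  have hτ : (τ ^ q ^ 2) ^ q ^ 2 = τ ^ q := by
    rw [← pow_mul, show q ^ 2 * q ^ 2 = q ^ 3 * q by ring, pow_mul, pow_pow_three_eq_self hF]
  rw [← hσ, fVal_eq_mul_chordForm, map_mul, map_sub, map_chordForm, hσ, hσ, hτ,
    gVal_eq_mul_chordForm]

theorem fVal_ne_zero {τ : F} (hτ : τ ∉ Set.range (algebraMap k F)) {x y z : k}
    (hxyz : ¬(x = 0 ∧ y = 0 ∧ z = 0)) : fVal k F q τ x y z ≠ 0 := by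
  have hσ := frobeniusAlgEquivOfAlgebraic_pow_apply (K := k) (L := F) 1
  simp only [pow_one, hk] at hσ
  have hτ₃ : (τ ^ q ^ 2) ^ q = τ := by rw [← pow_mul, ← pow_succ, pow_pow_three_eq_self hF]
  have hτ₁ : τ ^ q ≠ τ := fun h => hτ (mem_range_algebraMap_of_pow_card_eq_self (hk ▸ h))
  have hτ₂ : τ ≠ τ ^ q ^ 2 := fun h => hτ₁ ((congrArg (· ^ q) h).trans hτ₃)
  have hτ₁₂ : τ ^ q ^ 2 ≠ τ ^ q := fun h =>
    hτ₁ ((frobeniusAlgEquivOfAlgebraic k F).injective (by rwa [hσ, hσ, ← pow_mul, ← pow_two]))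
  rw [fVal_eq_mul_chordForm]
  refine mul_ne_zero (sub_ne_zero.2 hτ₂) fun h => hxyz ?_
  have h' : chordForm x y z τ (τ ^ q) = 0 := by
    have := congrArg (frobeniusAlgEquivOfAlgebraic k F) h
    rwa [map_chordForm, map_zero, hσ, hσ, hτ₃, chordForm_comm] at this
  exact eq_zero_of_chordForm_eq_zero hτ hτ₁₂ h h'

theorem fVal_surjective {τ : F} (hτ : τ ∉ Set.range (algebraMap k F)) (w : F) :
    ∃ x y z : k, fVal k F q τ x y z = w := by
  have hinj : Function.Injective fun X : k × k × k => fVal k F q τ X.1 X.2.1 X.2.2 := by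
    rintro ⟨x, y, z⟩ ⟨x', y', z'⟩ h
    have hzero : fVal k F q τ (x - x') (y - y') (z - z') = 0 := by
      rw [← fVal_sub, sub_eq_zero]
      exact h
    by_contra hne
    refine fVal_ne_zero hk hF hτ (fun ⟨hx, hy, hz⟩ => hne ?_) hzero
    rw [sub_eq_zero] at hx hy hz
    rw [hx, hy, hz]
  obtain ⟨⟨x, y, z⟩, h⟩ := ((Fintype.bijective_iff_injective_and_card _).2
    ⟨hinj, by simp only [Fintype.card_prod, hk, hF]; ring⟩).2 w
  exact ⟨x, y, z, h⟩

theorem pow_eq_one_iff_exists_fVal_div_gVal {τ : F} (hτ : τ ∉ Set.range (algebraMap k F))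
    (θ : F) : θ ^ (q ^ 2 + q + 1) = 1 ↔
      ∃ x y z : k, ¬(x = 0 ∧ y = 0 ∧ z = 0) ∧ θ = fVal k F q τ x y z / gVal k F q τ x y z := by
  simp_rw [pow_eq_one_iff_exists_units_div_pow hk hF, ← fVal_pow_eq_gVal hk hF]
  constructor
  · rintro ⟨w, rfl⟩
    obtain ⟨x, y, z, hw⟩ := fVal_surjective hk hF hτ w
    refine ⟨x, y, z, ?_, by rw [hw]⟩
    rintro ⟨rfl, rfl, rfl⟩
    exact w.ne_zero (by rw [← hw, fVal_zero])
  · rintro ⟨x, y, z, hxyz, rfl⟩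
    exact ⟨Units.mk0 _ (fVal_ne_zero hk hF hτ hxyz), rfl⟩

end Subplane

theorem stmt19_general (n q : ℕ) (hq : q = 2 ^ n)
    (k F : Type) [Field k] [Field F] [Algebra k F] [Fintype k] [Fintype F]
    (hk : Fintype.card k = q) (hF : Fintype.card F = q ^ 3)
    (τ : F) (hdeg : (minpoly k τ).natDegree = 3) :
    (∀ x y z : k, ¬(x = 0 ∧ y = 0 ∧ z = 0) →
      (fVal k F q τ x y z) ^ (q ^ 2) = gVal k F q τ x y z ∧
      (fVal k F q τ x y z / gVal k F q τ x y z) ^ (q ^ 2 + q + 1) = 1 ∧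
      (fVal k F q τ x y z / gVal k F q τ x y z) ^ (q ^ 2 + q + 1) = -1 ∧
      -- the point E + θE^q lies on ℓ = [-ττ^q, τ+τ^q, -1] ...
      (-(τ * τ ^ q) * (![1, τ, τ ^ 2] +
          (fVal k F q τ x y z / gVal k F q τ x y z) • ![1, τ ^ q, τ ^ (2 * q)]) 0 +
        (τ + τ ^ q) * (![1, τ, τ ^ 2] +
          (fVal k F q τ x y z / gVal k F q τ x y z) • ![1, τ ^ q, τ ^ (2 * q)]) 1 -
        (![1, τ, τ ^ 2] +
          (fVal k F q τ x y z / gVal k F q τ x y z) • ![1, τ ^ q, τ ^ (2 * q)]) 2 = 0) ∧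
      -- ... and on the line joining (x,y,z) to P = (1, τ^{q²}, τ^{2q²}):
      Matrix.det (Matrix.of
        ![(fun i => algebraMap k F (![x, y, z] i)),
          ![1, τ ^ (q ^ 2), τ ^ (2 * q ^ 2)],
          ![1, τ, τ ^ 2] +
            (fVal k F q τ x y z / gVal k F q τ x y z) • ![1, τ ^ q, τ ^ (2 * q)]]) = 0) ∧
    -- the projection of PG(2,q) from P onto ℓ equals the exterior splash:
    {θ : F | ∃ x y z : k, ¬(x = 0 ∧ y = 0 ∧ z = 0) ∧
        θ = fVal k F q τ x y z / gVal k F q τ x y z} =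
      {θ : F | θ ^ (q ^ 2 + q + 1) = -1} := by
  have : CharP k 2 := charP_of_card_eq_prime_pow (hk.trans hq)
  have : CharP F 2 := charP_of_injective_algebraMap' k 2
  have hτ : τ ∉ Set.range (algebraMap k F) := by
    rintro ⟨c, rfl⟩
    simp [minpoly.eq_X_sub_C F c] at hdeg
  refine ⟨fun x y z hxyz => ?_, ?_⟩
  · have hθ := (pow_eq_one_iff_exists_fVal_div_gVal hk hF hτ _).2 ⟨x, y, z, hxyz, rfl⟩
    have hg : gVal k F q τ x y z ≠ 0 :=
      fVal_pow_eq_gVal hk hF τ x y z ▸ pow_ne_zero _ (fVal_ne_zero hk hF hτ hxyz)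
    refine ⟨fVal_pow_eq_gVal hk hF τ x y z, hθ, by rw [hθ, CharTwo.neg_eq],
      add_smul_mem_exteriorLine q τ _, ?_⟩
    rw [det_eq_fVal_sub_mul_gVal, div_mul_cancel₀ _ hg, sub_self]
  · ext θ
    rw [Set.mem_ofPred_eq, Set.mem_ofPred_eq, CharTwo.neg_eq,
      pow_eq_one_iff_exists_fVal_div_gVal hk hF hτ]

/-- for q even and P = (1, τ^{q²}, τ^{2q²}), the line joining any point
(x,y,z) of PG(2,q) to P meets ℓ = [-ττ^q, τ+τ^q, -1] in the point E + θE^q with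
θ = f/g satisfying f^{q²} = g and θ^{q²+q+1} = 1 = -1; hence the projection of PG(2,q)
from P onto ℓ equals the exterior splash {E + θE^q : θ^{q²+q+1} = -1}. -/
theorem stmt19 (n q : ℕ) (hn : 0 < n) (hq : q = 2 ^ n)
    (k F : Type) [Field k] [Field F] [Algebra k F] [Fintype k] [Fintype F]
    (hk : Fintype.card k = q) (hF : Fintype.card F = q ^ 3)
    (τ : F) (hdeg : (minpoly k τ).natDegree = 3) :
    (∀ x y z : k, ¬(x = 0 ∧ y = 0 ∧ z = 0) →
      (fVal k F q τ x y z) ^ (q ^ 2) = gVal k F q τ x y z ∧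
      (fVal k F q τ x y z / gVal k F q τ x y z) ^ (q ^ 2 + q + 1) = 1 ∧
      (fVal k F q τ x y z / gVal k F q τ x y z) ^ (q ^ 2 + q + 1) = -1 ∧
      -- the point E + θE^q lies on ℓ = [-ττ^q, τ+τ^q, -1] ...
      (-(τ * τ ^ q) * (![1, τ, τ ^ 2] +
          (fVal k F q τ x y z / gVal k F q τ x y z) • ![1, τ ^ q, τ ^ (2 * q)]) 0 +
        (τ + τ ^ q) * (![1, τ, τ ^ 2] +
          (fVal k F q τ x y z / gVal k F q τ x y z) • ![1, τ ^ q, τ ^ (2 * q)]) 1 -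
        (![1, τ, τ ^ 2] +
          (fVal k F q τ x y z / gVal k F q τ x y z) • ![1, τ ^ q, τ ^ (2 * q)]) 2 = 0) ∧
      -- ... and on the line joining (x,y,z) to P = (1, τ^{q²}, τ^{2q²}):
      Matrix.det (Matrix.of
        ![(fun i => algebraMap k F (![x, y, z] i)),
          ![1, τ ^ (q ^ 2), τ ^ (2 * q ^ 2)],
          ![1, τ, τ ^ 2] +
            (fVal k F q τ x y z / gVal k F q τ x y z) • ![1, τ ^ q, τ ^ (2 * q)]]) = 0) ∧
    -- the projection of PG(2,q) from P onto ℓ equals the exterior splash: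
    {θ : F | ∃ x y z : k, ¬(x = 0 ∧ y = 0 ∧ z = 0) ∧
        θ = fVal k F q τ x y z / gVal k F q τ x y z} =
      {θ : F | θ ^ (q ^ 2 + q + 1) = -1} :=
  stmt19_general n q hq k F hk hF τ hdeg
end
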